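/- arXiv:1805.07958 — 4 statements merged into one kernel-verified Lean document; each statement's English description precedes it below -/
import Mathlib

section
/- With the setup of the third-order nonlinearity g_m(u) = u − a_m|u|^2 u and jointly circularly-symmetric Gaussians u_i, u_j, one has E[g_i(u_i)·conj(g_j(u_j))] = (1 − 2 a_i ρ_ii)·ρ_ij·(1 − 2 a_j ρ_jj) + 2 a_i a_j |ρ_ij|^2 ρ_ij. -/
open MeasureTheory ProbabilityTheory Complex ComplexConjugate

/-- A circularly-symmetric complex Gaussian random variable with variance `ρ`:
real and imaginary parts are independent real Gaussians each of variance `ρ/2`. -/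
def IsCircGaussian {Ω : Type*} [MeasurableSpace Ω] (μ : Measure Ω) (u : Ω → ℂ) (ρ : ℝ) : Prop :=
  μ.map (fun ω => (u ω).re) = gaussianReal 0 (Real.toNNReal (ρ / 2)) ∧
  μ.map (fun ω => (u ω).im) = gaussianReal 0 (Real.toNNReal (ρ / 2)) ∧
  IndepFun (fun ω => (u ω).re) (fun ω => (u ω).im) μ

/-- Third-order nonlinearity `g(u) = u − a|u|²u`. -/
noncomputable def thirdOrderNL (a : ℝ) (u : ℂ) : ℂ :=
  u - (a : ℂ) * (Complex.normSq u : ℂ) * u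

open Filter

noncomputable def gprod (t : NNReal) : Measure (ℝ × ℝ) :=
  (gaussianReal 0 t).prod (gaussianReal 0 t)

instance (t : NNReal) : IsProbabilityMeasure (gprod t) := by
  unfold gprod; infer_instance

def mk2 : ℝ × ℝ → ℂ := fun p => ⟨p.1, p.2⟩



lemma aux_int_exp (n : ℕ) {b : ℝ} (hb : 0 < b) :
    Integrable (fun x : ℝ => x ^ n * Real.exp (-b * x ^ 2)) := by
  have h := integrable_rpow_mul_exp_neg_mul_sq hb (s := (n : ℝ))
    (lt_of_lt_of_le (by norm_num) (Nat.cast_nonneg n))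
  simpa [Real.rpow_natCast] using h

lemma aux_parts (n : ℕ) {b : ℝ} (hb : 0 < b) :
    ∫ x : ℝ, x ^ (n + 2) * Real.exp (-b * x ^ 2)
      = ((n : ℝ) + 1) / (2 * b) * ∫ x : ℝ, x ^ n * Real.exp (-b * x ^ 2) := by
  set u : ℝ → ℝ := fun x => x ^ (n + 1) with hu_def
  set v : ℝ → ℝ := fun x => Real.exp (-b * x ^ 2) with hv_def
  set u' : ℝ → ℝ := fun x => ((n : ℝ) + 1) * x ^ n with hu'_def
  set v' : ℝ → ℝ := fun x => Real.exp (-b * x ^ 2) * (-b * (2 * x)) with hv'_def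
  have hu : ∀ x, HasDerivAt u (u' x) x := by
    intro x
    simpa [hu_def, hu'_def] using hasDerivAt_pow (n + 1) x
  have hv : ∀ x, HasDerivAt v (v' x) x := by
    intro x
    have h1 : HasDerivAt (fun x : ℝ => -b * x ^ 2) (-b * (2 * x)) x := by
      simpa using (hasDerivAt_pow 2 x).const_mul (-b)
    exact h1.exp
  have e1 : (u * v') = fun x : ℝ => (-(2 * b)) * (x ^ (n + 2) * Real.exp (-b * x ^ 2)) := by
    funext x; simp only [Pi.mul_apply, hu_def, hv'_def]; ring
  have e2 : (u' * v) = fun x : ℝ => ((n : ℝ) + 1) * (x ^ n * Real.exp (-b * x ^ 2)) := by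
    funext x; simp only [Pi.mul_apply, hu'_def, hv_def]; ring
  have e3 : (u * v) = fun x : ℝ => x ^ (n + 1) * Real.exp (-b * x ^ 2) := by
    funext x; simp [hu_def, hv_def]
  have huv' : Integrable (u * v') := by rw [e1]; exact (aux_int_exp (n + 2) hb).const_mul _
  have hu'v : Integrable (u' * v) := by rw [e2]; exact (aux_int_exp n hb).const_mul _
  have huv : Integrable (u * v) := by rw [e3]; exact aux_int_exp (n + 1) hb
  have key := integral_mul_deriv_eq_deriv_mul_of_integrable (fun x _ => hu x) (fun x _ => hv x) huv' hu'v huv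
  have l1 : ∫ x : ℝ, u x * v' x
      = (-(2 * b)) * ∫ x : ℝ, x ^ (n + 2) * Real.exp (-b * x ^ 2) := by
    rw [show (fun x : ℝ => u x * v' x) = fun x : ℝ =>
      (-(2 * b)) * (x ^ (n + 2) * Real.exp (-b * x ^ 2)) from e1]
    exact integral_const_mul _ _
  have l2 : ∫ x : ℝ, u' x * v x
      = ((n : ℝ) + 1) * ∫ x : ℝ, x ^ n * Real.exp (-b * x ^ 2) := by
    rw [show (fun x : ℝ => u' x * v x) = fun x : ℝ =>
      ((n : ℝ) + 1) * (x ^ n * Real.exp (-b * x ^ 2)) from e2]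
    exact integral_const_mul _ _
  rw [l1, l2] at key
  have hb' : (2 * b) ≠ 0 := by positivity
  field_simp at key ⊢
  linarith [key]

lemma gauss_pdf_pt {t : NNReal} (ht : t ≠ 0) (n : ℕ) (x : ℝ) :
    gaussianPDFReal 0 t x * x ^ n
      = (Real.sqrt (2 * Real.pi * t))⁻¹ * (x ^ n * Real.exp (-(2 * (t : ℝ))⁻¹ * x ^ 2)) := by
  have htpos : (0 : ℝ) < (t : ℝ) := lt_of_le_of_ne t.2 (by simpa [eq_comm] using ht)
  simp only [gaussianPDFReal_def]
  have harg : -(x - 0) ^ 2 / (2 * (t : ℝ)) = -(2 * (t : ℝ))⁻¹ * x ^ 2 := by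
    field_simp; ring
  rw [harg]; ring

lemma gauss_conv {t : NNReal} (ht : t ≠ 0) (g : ℝ → ℝ) :
    ∫ x, g x ∂(gaussianReal 0 t) = ∫ x, gaussianPDFReal 0 t x * g x := by
  rw [gaussianReal_of_var_ne_zero 0 ht]
  have : (gaussianPDF 0 t) = fun x => ((gaussianPDFReal 0 t x).toNNReal : ENNReal) := by
    funext x; rw [gaussianPDF_def]; rfl
  rw [this, integral_withDensity_eq_integral_smul
    ((measurable_gaussianPDFReal 0 t).real_toNNReal) g]
  congr 1; funext x
  simp [NNReal.smul_def, Real.coe_toNNReal _ (gaussianPDFReal_nonneg 0 t x)]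

lemma gauss_int_pow (t : NNReal) (n : ℕ) : Integrable (fun x => x ^ n) (gaussianReal 0 t) := by
  by_cases ht : t = 0
  · subst ht; rw [gaussianReal_zero_var]
    exact (integrable_const ((0:ℝ) ^ n)).congr (ae_eq_dirac (fun x : ℝ => x ^ n)).symm
  · rw [gaussianReal_of_var_ne_zero 0 ht]
    have hmeas : Measurable (fun x => (gaussianPDFReal 0 t x).toNNReal) :=
      (measurable_gaussianPDFReal 0 t).real_toNNReal
    have hpdf : (gaussianPDF 0 t) = fun x => ((gaussianPDFReal 0 t x).toNNReal : ENNReal) := by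
      funext x; rw [gaussianPDF_def]; rfl
    rw [hpdf, integrable_withDensity_iff_integrable_smul hmeas]
    have htpos : (0 : ℝ) < (t : ℝ) := lt_of_le_of_ne t.2 (by simpa [eq_comm] using ht)
    have hb : (0 : ℝ) < (2 * (t : ℝ))⁻¹ := inv_pos.mpr (by linarith)
    have key := (aux_int_exp n hb).const_mul ((Real.sqrt (2 * Real.pi * t))⁻¹)
    refine key.congr (Eventually.of_forall fun x => ?_)
    simp only [NNReal.smul_def, Real.coe_toNNReal _ (gaussianPDFReal_nonneg 0 t x)]
    exact (gauss_pdf_pt ht n x).symm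

lemma gauss_rec (t : NNReal) (n : ℕ) :
    ∫ x, x ^ (n + 2) ∂(gaussianReal 0 t)
      = ((n : ℝ) + 1) * t * ∫ x, x ^ n ∂(gaussianReal 0 t) := by
  by_cases ht : t = 0
  · subst ht
    rw [gaussianReal_zero_var, integral_dirac]
    simp
  · have htpos : (0 : ℝ) < (t : ℝ) := lt_of_le_of_ne t.2 (by simpa [eq_comm] using ht)
    have hb : (0 : ℝ) < (2 * (t : ℝ))⁻¹ := inv_pos.mpr (by linarith)
    rw [gauss_conv ht, gauss_conv ht]
    have c1 : ∀ m : ℕ, ∫ x, gaussianPDFReal 0 t x * x ^ m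
        = (Real.sqrt (2 * Real.pi * t))⁻¹
          * ∫ x, x ^ m * Real.exp (-(2 * (t : ℝ))⁻¹ * x ^ 2) := by
      intro m
      rw [show (fun x => gaussianPDFReal 0 t x * x ^ m) = fun x =>
        (Real.sqrt (2 * Real.pi * t))⁻¹ * (x ^ m * Real.exp (-(2 * (t : ℝ))⁻¹ * x ^ 2))
        from funext fun x => gauss_pdf_pt ht m x]
      exact integral_const_mul _ _
    rw [c1, c1, aux_parts n hb]
    have h2 : ((n : ℝ) + 1) / (2 * (2 * (t : ℝ))⁻¹) = ((n : ℝ) + 1) * t := by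
      rw [div_eq_iff (by positivity)]
      field_simp
    rw [h2]; ring

lemma gauss_mom2 (t : NNReal) : ∫ x, x ^ 2 ∂(gaussianReal 0 t) = t := by
  have := gauss_rec t 0
  simpa using this

lemma gauss_mom4 (t : NNReal) : ∫ x, x ^ 4 ∂(gaussianReal 0 t) = 3 * (t : ℝ) ^ 2 := by
  have := gauss_rec t 2
  rw [gauss_mom2 t] at this
  rw [show (4 : ℕ) = 2 + 2 from rfl, this]; ring

lemma gauss_mom6 (t : NNReal) : ∫ x, x ^ 6 ∂(gaussianReal 0 t) = 15 * (t : ℝ) ^ 3 := by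
  have := gauss_rec t 4
  rw [gauss_mom4 t] at this
  rw [show (6 : ℕ) = 4 + 2 from rfl, this]; ring

lemma gauss_int_abs (t : NNReal) (m : ℕ) :
    Integrable (fun x => |x| ^ m) (gaussianReal 0 t) := by
  have hbound : ∀ x : ℝ, |x| ^ m ≤ 1 + x ^ (2 * m) := by
    intro x
    have heq : x ^ (2 * m) = (|x| ^ m) ^ 2 := by
      calc x ^ (2 * m) = (x ^ 2) ^ m := pow_mul x 2 m
        _ = (|x| ^ 2) ^ m := by rw [_root_.sq_abs]
        _ = (|x| ^ m) ^ 2 := by rw [← pow_mul, mul_comm, pow_mul]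
    rw [heq]
    nlinarith [sq_nonneg (|x| ^ m - 1)]
  refine Integrable.mono' ((integrable_const (1:ℝ)).add (gauss_int_pow t (2 * m)))
    ?_ (Eventually.of_forall fun x => ?_)
  · exact (_root_.continuous_abs.pow m).aestronglyMeasurable
  · rw [Real.norm_eq_abs, _root_.abs_of_nonneg (by positivity)]
    simpa using hbound x

-- from blk1 (axiomatized here for speed)




lemma continuous_mk2 : Continuous mk2 := by
  have : mk2 = fun p : ℝ × ℝ => (p.1 : ℂ) + p.2 * I := by
    funext p; simp [mk2, Complex.ext_iff]
  rw [this]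
  continuity

lemma measurable_mk2 : Measurable mk2 := continuous_mk2.measurable

lemma gauss_map_neg (t : NNReal) :
    (gaussianReal 0 t).map (fun x => -x) = gaussianReal 0 t := by
  have h := gaussianReal_map_const_mul (μ := 0) (v := t) (-1)
  have h1 : (fun x : ℝ => -1 * x) = fun x : ℝ => -x := by funext x; ring
  have h2 : (⟨(-1 : ℝ) ^ 2, by positivity⟩ : NNReal) = 1 := by ext; norm_num
  rw [h1] at h
  simpa using h

lemma gprod_map_rot (t : NNReal) :
    (gprod t).map (fun q : ℝ × ℝ => (-q.2, q.1)) = gprod t := by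
  have hcomp : (fun q : ℝ × ℝ => (-q.2, q.1))
      = (Prod.map (fun x : ℝ => -x) id) ∘ Prod.swap := by
    funext q; simp [Prod.map]
  rw [hcomp, ← Measure.map_map (Measurable.prodMap measurable_neg measurable_id) measurable_swap]
  unfold gprod
  rw [Measure.prod_swap, ← Measure.map_prod_map _ _ measurable_neg measurable_id,
    gauss_map_neg, Measure.map_id]

lemma rot_integral (t : NNReal) (f : ℂ → ℂ) (hf : Measurable f) :
    ∫ q, f (mk2 q) ∂(gprod t) = ∫ q, f (I * mk2 q) ∂(gprod t) := by
  have hR : Measurable (fun q : ℝ × ℝ => (-q.2, q.1)) :=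
    measurable_snd.neg.prodMk measurable_fst
  have hpt : ∀ q : ℝ × ℝ, mk2 (-q.2, q.1) = I * mk2 q := by
    intro q; simp [mk2, Complex.ext_iff]
  calc ∫ q, f (mk2 q) ∂(gprod t)
      = ∫ q, f (mk2 q) ∂((gprod t).map (fun q : ℝ × ℝ => (-q.2, q.1))) := by
        rw [gprod_map_rot]
    _ = ∫ q, f (mk2 (-q.2, q.1)) ∂(gprod t) := by
        exact integral_map hR.aemeasurable ((hf.comp measurable_mk2).aestronglyMeasurable)
    _ = ∫ q, f (I * mk2 q) ∂(gprod t) := by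
        congr 1; funext q; rw [hpt]

lemma momC_zero (t : NNReal) (r s : ℕ) (h : (I : ℂ) ^ r * (-I) ^ s ≠ 1) :
    ∫ q, (mk2 q) ^ r * (conj (mk2 q)) ^ s ∂(gprod t) = 0 := by
  have hmeas : Measurable (fun z : ℂ => z ^ r * (conj z) ^ s) :=
    ((measurable_id.pow_const r).mul ((Complex.continuous_conj.measurable).pow_const s))
  have hrot := rot_integral t (fun z : ℂ => z ^ r * (conj z) ^ s) hmeas
  have hpt : ∀ z : ℂ, (I * z) ^ r * (conj (I * z)) ^ s
      = ((I : ℂ) ^ r * (-I) ^ s) * (z ^ r * (conj z) ^ s) := by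
    intro z
    simp only [map_mul, Complex.conj_I, mul_pow]
    ring
  rw [show (fun q => (I * mk2 q) ^ r * (conj (I * mk2 q)) ^ s)
      = fun q => ((I : ℂ) ^ r * (-I) ^ s) * ((mk2 q) ^ r * (conj (mk2 q)) ^ s)
      from funext fun q => hpt (mk2 q)] at hrot
  rw [integral_const_mul] at hrot
  have h2 : ((1 : ℂ) - (I ^ r * (-I) ^ s))
      * (∫ q, (mk2 q) ^ r * (conj (mk2 q)) ^ s ∂(gprod t)) = 0 := by
    rw [sub_mul, one_mul]
    linear_combination hrot
  rcases mul_eq_zero.mp h2 with h3 | h3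
  · exact absurd (by linear_combination -h3) h
  · exact h3



-- zero moment specializations
lemma z_e (t : NNReal) : ∫ q, mk2 q ∂(gprod t) = 0 := by
  have h := momC_zero t 1 0 (by simp [Complex.ext_iff])
  simpa using h

lemma z_ce (t : NNReal) : ∫ q, conj (mk2 q) ∂(gprod t) = 0 := by
  have h := momC_zero t 0 1 (by simp [Complex.ext_iff])
  simpa using h

lemma z_e2 (t : NNReal) : ∫ q, (mk2 q) ^ 2 ∂(gprod t) = 0 := by
  have h := momC_zero t 2 0 (by simp [Complex.I_sq]; norm_num [Complex.ext_iff])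
  simpa using h

lemma z_e2ce (t : NNReal) : ∫ q, (mk2 q) ^ 2 * conj (mk2 q) ∂(gprod t) = 0 := by
  have h := momC_zero t 2 1 (by
    simp [Complex.I_sq]
    norm_num [Complex.ext_iff])
  simpa using h

-- integrable monomials (real)
lemma intg (t : NNReal) (a b : ℕ) : Integrable (fun q : ℝ × ℝ => q.1 ^ a * q.2 ^ b) (gprod t) :=
  (gauss_int_pow t a).mul_prod (gauss_int_pow t b)

lemma valg (t : NNReal) (a b : ℕ) : ∫ q : ℝ × ℝ, q.1 ^ a * q.2 ^ b ∂(gprod t)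
    = (∫ x, x ^ a ∂(gaussianReal 0 t)) * ∫ x, x ^ b ∂(gaussianReal 0 t) :=
  integral_prod_mul _ _

-- real normSq moments
lemma nsq_pt (q : ℝ × ℝ) (k : ℕ) : (normSq (mk2 q)) ^ k = (q.1 ^ 2 + q.2 ^ 2) ^ k := by
  simp only [mk2, Complex.normSq_mk]; ring

lemma int_nsq (t : NNReal) (k : ℕ) :
    Integrable (fun q : ℝ × ℝ => (normSq (mk2 q)) ^ k) (gprod t) := by
  have h : (fun q : ℝ × ℝ => (normSq (mk2 q)) ^ k)
      = fun q : ℝ × ℝ => (q.1 ^ 2 + q.2 ^ 2) ^ k := funext fun q => nsq_pt q k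
  rw [h]
  have : ∀ q : ℝ × ℝ, (q.1 ^ 2 + q.2 ^ 2) ^ k
      = ∑ j ∈ Finset.range (k + 1), (k.choose j : ℝ) * (q.1 ^ (2 * j) * q.2 ^ (2 * (k - j))) := by
    intro q
    rw [add_pow]
    refine Finset.sum_congr rfl fun j hj => ?_
    rw [← pow_mul, ← pow_mul]
    ring
  rw [funext this]
  exact integrable_finset_sum _ fun j _ => (intg t (2 * j) (2 * (k - j))).const_mul _

lemma nsq1 (t : NNReal) : ∫ q, normSq (mk2 q) ∂(gprod t) = 2 * (t : ℝ) := by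
  have h : (fun q : ℝ × ℝ => normSq (mk2 q))
      = fun q : ℝ × ℝ => q.1 ^ 2 * q.2 ^ 0 + q.1 ^ 0 * q.2 ^ 2 := by
    funext q; simp only [mk2, Complex.normSq_mk]; ring
  rw [h, integral_add (intg t 2 0) (intg t 0 2), valg, valg, gauss_mom2]
  simp; ring

lemma nsq2 (t : NNReal) : ∫ q, (normSq (mk2 q)) ^ 2 ∂(gprod t) = 8 * (t : ℝ) ^ 2 := by
  have h : (fun q : ℝ × ℝ => (normSq (mk2 q)) ^ 2)
      = fun q : ℝ × ℝ => (q.1 ^ 4 * q.2 ^ 0 + 2 * (q.1 ^ 2 * q.2 ^ 2)) + q.1 ^ 0 * q.2 ^ 4 := by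
    funext q; simp only [mk2, Complex.normSq_mk]; ring
  have i1 : Integrable (fun q : ℝ × ℝ => q.1 ^ 4 * q.2 ^ 0 + 2 * (q.1 ^ 2 * q.2 ^ 2))
      (gprod t) := (intg t 4 0).add ((intg t 2 2).const_mul 2)
  rw [h, integral_add i1 (intg t 0 4),
    integral_add (intg t 4 0) ((intg t 2 2).const_mul 2), integral_const_mul,
    valg, valg, valg, gauss_mom2, gauss_mom4]
  simp; ring

lemma nsq3 (t : NNReal) : ∫ q, (normSq (mk2 q)) ^ 3 ∂(gprod t) = 48 * (t : ℝ) ^ 3 := by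
  have h : (fun q : ℝ × ℝ => (normSq (mk2 q)) ^ 3)
      = fun q : ℝ × ℝ => ((q.1 ^ 6 * q.2 ^ 0 + 3 * (q.1 ^ 4 * q.2 ^ 2))
          + 3 * (q.1 ^ 2 * q.2 ^ 4)) + q.1 ^ 0 * q.2 ^ 6 := by
    funext q; simp only [mk2, Complex.normSq_mk]; ring
  have i1 : Integrable (fun q : ℝ × ℝ => q.1 ^ 6 * q.2 ^ 0 + 3 * (q.1 ^ 4 * q.2 ^ 2))
      (gprod t) := (intg t 6 0).add ((intg t 4 2).const_mul 3)
  have i2 : Integrable (fun q : ℝ × ℝ =>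
      q.1 ^ 6 * q.2 ^ 0 + 3 * (q.1 ^ 4 * q.2 ^ 2) + 3 * (q.1 ^ 2 * q.2 ^ 4)) (gprod t) :=
    i1.add ((intg t 2 4).const_mul 3)
  rw [h, integral_add i2 (intg t 0 6),
    integral_add i1 ((intg t 2 4).const_mul 3),
    integral_add (intg t 6 0) ((intg t 4 2).const_mul 3),
    integral_const_mul, integral_const_mul,
    valg, valg, valg, valg, gauss_mom2, gauss_mom4, gauss_mom6]
  simp; ring

-- complex diagonal moments
lemma mdiag_pt (z : ℂ) (k : ℕ) : z ^ k * (conj z) ^ k = ((normSq z : ℝ) ^ k : ℝ) := by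
  rw [← mul_pow, Complex.mul_conj]
  push_cast
  ring

lemma m11 (t : NNReal) : ∫ q, mk2 q * conj (mk2 q) ∂(gprod t) = ((2 * (t : ℝ) : ℝ) : ℂ) := by
  have h : (fun q : ℝ × ℝ => mk2 q * conj (mk2 q))
      = fun q : ℝ × ℝ => ((normSq (mk2 q) : ℝ) : ℂ) := by
    funext q; simpa using mdiag_pt (mk2 q) 1
  rw [h]
  calc ∫ q, ((normSq (mk2 q) : ℝ) : ℂ) ∂(gprod t)
      = ((∫ q, normSq (mk2 q) ∂(gprod t) : ℝ) : ℂ) := integral_ofReal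
    _ = _ := by rw [nsq1]

lemma m22 (t : NNReal) : ∫ q, (mk2 q) ^ 2 * (conj (mk2 q)) ^ 2 ∂(gprod t)
    = ((8 * (t : ℝ) ^ 2 : ℝ) : ℂ) := by
  have h : (fun q : ℝ × ℝ => (mk2 q) ^ 2 * (conj (mk2 q)) ^ 2)
      = fun q : ℝ × ℝ => (((normSq (mk2 q)) ^ 2 : ℝ) : ℂ) := by
    funext q; exact mdiag_pt (mk2 q) 2
  rw [h]
  calc ∫ q, (((normSq (mk2 q)) ^ 2 : ℝ) : ℂ) ∂(gprod t)
      = ((∫ q, (normSq (mk2 q)) ^ 2 ∂(gprod t) : ℝ) : ℂ) := integral_ofReal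
    _ = _ := by rw [nsq2]

lemma m33 (t : NNReal) : ∫ q, (mk2 q) ^ 3 * (conj (mk2 q)) ^ 3 ∂(gprod t)
    = ((48 * (t : ℝ) ^ 3 : ℝ) : ℂ) := by
  have h : (fun q : ℝ × ℝ => (mk2 q) ^ 3 * (conj (mk2 q)) ^ 3)
      = fun q : ℝ × ℝ => (((normSq (mk2 q)) ^ 3 : ℝ) : ℂ) := by
    funext q; exact mdiag_pt (mk2 q) 3
  rw [h]
  calc ∫ q, (((normSq (mk2 q)) ^ 3 : ℝ) : ℂ) ∂(gprod t)
      = ((∫ q, (normSq (mk2 q)) ^ 3 ∂(gprod t) : ℝ) : ℂ) := integral_ofReal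
    _ = _ := by rw [nsq3]

-- integrability of complex monomials
lemma gintC (t : NNReal) (r s : ℕ) :
    Integrable (fun q : ℝ × ℝ => (mk2 q) ^ r * (conj (mk2 q)) ^ s) (gprod t) := by
  set m := r + s with hm
  have hcont : Continuous (fun q : ℝ × ℝ => (mk2 q) ^ r * (conj (mk2 q)) ^ s) :=
    (continuous_mk2.pow r).mul ((Complex.continuous_conj.comp continuous_mk2).pow s)
  have hbd : Integrable (fun q : ℝ × ℝ =>
      (2 : ℝ) ^ m * (|q.1| ^ m * |q.2| ^ 0 + |q.1| ^ 0 * |q.2| ^ m)) (gprod t) :=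
    (((gauss_int_abs t m).mul_prod (gauss_int_abs t 0)).add
      ((gauss_int_abs t 0).mul_prod (gauss_int_abs t m))).const_mul _
  refine hbd.mono' hcont.aestronglyMeasurable (Eventually.of_forall fun q => ?_)
  have habs : ‖(mk2 q) ^ r * (conj (mk2 q)) ^ s‖ = ‖mk2 q‖ ^ m := by
    simp [map_mul, map_pow, hm, pow_add]
  rw [habs]
  have h1 : ‖mk2 q‖ ≤ |q.1| + |q.2| := by
    simpa [mk2] using Complex.norm_le_abs_re_add_abs_im (mk2 q)
  have h2 : ‖mk2 q‖ ^ m ≤ (|q.1| + |q.2|) ^ m :=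
    pow_le_pow_left₀ (norm_nonneg _) h1 m
  have h3 : (|q.1| + |q.2|) ^ m ≤ 2 ^ m * (|q.1| ^ m + |q.2| ^ m) := by
    have hmax : |q.1| + |q.2| ≤ 2 * max (|q.1|) (|q.2|) := by
      rcases le_total (|q.1|) (|q.2|) with h | h
      · rw [max_eq_right h]; linarith
      · rw [max_eq_left h]; linarith
    calc (|q.1| + |q.2|) ^ m ≤ (2 * max (|q.1|) (|q.2|)) ^ m :=
          pow_le_pow_left₀ (by positivity) hmax m
      _ = 2 ^ m * (max (|q.1|) (|q.2|)) ^ m := mul_pow 2 _ m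
      _ ≤ 2 ^ m * (|q.1| ^ m + |q.2| ^ m) := by
          gcongr
          rcases max_cases (|q.1|) (|q.2|) with ⟨hc, _⟩ | ⟨hc, _⟩ <;> rw [hc]
          · nlinarith [pow_nonneg (abs_nonneg q.2) m, pow_nonneg (abs_nonneg q.1) m]
          · nlinarith [pow_nonneg (abs_nonneg q.2) m, pow_nonneg (abs_nonneg q.1) m]
  calc ‖mk2 q‖ ^ m ≤ (|q.1| + |q.2|) ^ m := h2
    _ ≤ 2 ^ m * (|q.1| ^ m + |q.2| ^ m) := h3
    _ = 2 ^ m * (|q.1| ^ m * |q.2| ^ 0 + |q.1| ^ 0 * |q.2| ^ m) := by simp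




lemma circ_law {Ω : Type*} [MeasurableSpace Ω] {μ : Measure Ω} [IsProbabilityMeasure μ]
    {u : Ω → ℂ} (hu : Measurable u) {ρ : ℝ} (h : IsCircGaussian μ u ρ) :
    μ.map u = (gprod (Real.toNNReal (ρ / 2))).map mk2 := by
  obtain ⟨hre, him, hind⟩ := h
  have hpair : μ.map (fun ω => ((u ω).re, (u ω).im))
      = (μ.map (fun ω => (u ω).re)).prod (μ.map (fun ω => (u ω).im)) :=
    (indepFun_iff_map_prod_eq_prod_map_map
      (Complex.measurable_re.comp hu).aemeasurable
      (Complex.measurable_im.comp hu).aemeasurable).mp hind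
  have hcomp : u = mk2 ∘ (fun ω => ((u ω).re, (u ω).im)) := by
    funext ω; rfl
  have h1 : Measurable (fun ω => ((u ω).re, (u ω).im)) :=
    (Complex.measurable_re.comp hu).prodMk (Complex.measurable_im.comp hu)
  rw [show μ.map u = μ.map (mk2 ∘ (fun ω => ((u ω).re, (u ω).im))) from by rw [← hcomp]]
  rw [← Measure.map_map measurable_mk2 h1]
  rw [hpair, hre, him]
  rfl



lemma m11p (t : NNReal) : ∫ q, mk2 q ^ 1 * conj (mk2 q) ^ 1 ∂(gprod t)
    = ((2 * (t : ℝ) : ℝ) : ℂ) := by simpa using m11 t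

lemma expand_pt (ai aj : ℝ) (c e w : ℂ) :
    thirdOrderNL ai (c * w + e) * conj (thirdOrderNL aj w)
      = (c * w - ↑ai * c ^ 2 * conj c * (w ^ 2 * conj w))
          * (conj w - ↑aj * (w * (conj w) ^ 2))
        + e * ((1 - 2 * ↑ai * c * conj c * (w * conj w))
          * (conj w - ↑aj * (w * (conj w) ^ 2)))
        + conj e * ((-(↑ai : ℂ) * c ^ 2 * w ^ 2) * (conj w - ↑aj * (w * (conj w) ^ 2)))
        + e * conj e * ((-(2 * (↑ai : ℂ)) * c * w) * (conj w - ↑aj * (w * (conj w) ^ 2)))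
        + e ^ 2 * ((-(↑ai : ℂ) * conj c * conj w) * (conj w - ↑aj * (w * (conj w) ^ 2)))
        + e ^ 2 * conj e * ((-(↑ai : ℂ)) * (conj w - ↑aj * (w * (conj w) ^ 2))) := by
  simp only [thirdOrderNL, ← Complex.mul_conj, map_sub, map_mul, map_add,
    Complex.conj_conj, Complex.conj_ofReal]
  ring

lemma inner1 (t : NNReal) (ai aj : ℝ) (c : ℂ) :
    ∫ q, (c * mk2 q - ↑ai * c ^ 2 * conj c * ((mk2 q) ^ 2 * conj (mk2 q)))
        * (conj (mk2 q) - ↑aj * (mk2 q * (conj (mk2 q)) ^ 2)) ∂(gprod t)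
      = c * ((2 * (t : ℝ) : ℝ) : ℂ)
        + (-(↑aj * c) - ↑ai * c ^ 2 * conj c) * ((8 * (t : ℝ) ^ 2 : ℝ) : ℂ)
        + (↑ai * ↑aj * c ^ 2 * conj c) * ((48 * (t : ℝ) ^ 3 : ℝ) : ℂ) := by
  have hfun : (fun q : ℝ × ℝ => (c * mk2 q - ↑ai * c ^ 2 * conj c * ((mk2 q) ^ 2 * conj (mk2 q)))
        * (conj (mk2 q) - ↑aj * (mk2 q * (conj (mk2 q)) ^ 2)))
      = fun q : ℝ × ℝ => c * (mk2 q ^ 1 * conj (mk2 q) ^ 1)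
        + (-(↑aj * c) - ↑ai * c ^ 2 * conj c) * (mk2 q ^ 2 * conj (mk2 q) ^ 2)
        + (↑ai * ↑aj * c ^ 2 * conj c) * (mk2 q ^ 3 * conj (mk2 q) ^ 3) := by
    funext q; ring
  have iA : Integrable (fun q : ℝ × ℝ => c * (mk2 q ^ 1 * conj (mk2 q) ^ 1)) (gprod t) :=
    (gintC t 1 1).const_mul c
  have iB : Integrable (fun q : ℝ × ℝ =>
      (-(↑aj * c) - ↑ai * c ^ 2 * conj c) * (mk2 q ^ 2 * conj (mk2 q) ^ 2)) (gprod t) :=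
    (gintC t 2 2).const_mul _
  have iAB : Integrable (fun q : ℝ × ℝ => c * (mk2 q ^ 1 * conj (mk2 q) ^ 1)
      + (-(↑aj * c) - ↑ai * c ^ 2 * conj c) * (mk2 q ^ 2 * conj (mk2 q) ^ 2)) (gprod t) :=
    iA.add iB
  have iC : Integrable (fun q : ℝ × ℝ =>
      (↑ai * ↑aj * c ^ 2 * conj c) * (mk2 q ^ 3 * conj (mk2 q) ^ 3)) (gprod t) :=
    (gintC t 3 3).const_mul _
  rw [hfun, integral_add iAB iC, integral_add iA iB,
    integral_const_mul, integral_const_mul, integral_const_mul, m11p, m22, m33]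

lemma inner4 (t : NNReal) (ai aj : ℝ) (c : ℂ) :
    ∫ q, (-(2 * (↑ai : ℂ)) * c * mk2 q)
        * (conj (mk2 q) - ↑aj * (mk2 q * (conj (mk2 q)) ^ 2)) ∂(gprod t)
      = -(2 * (↑ai : ℂ)) * c * ((2 * (t : ℝ) : ℝ) : ℂ)
        + 2 * ↑ai * ↑aj * c * ((8 * (t : ℝ) ^ 2 : ℝ) : ℂ) := by
  have hfun : (fun q : ℝ × ℝ => (-(2 * (↑ai : ℂ)) * c * mk2 q)
        * (conj (mk2 q) - ↑aj * (mk2 q * (conj (mk2 q)) ^ 2)))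
      = fun q : ℝ × ℝ => (-(2 * (↑ai : ℂ)) * c) * (mk2 q ^ 1 * conj (mk2 q) ^ 1)
        + (2 * ↑ai * ↑aj * c) * (mk2 q ^ 2 * conj (mk2 q) ^ 2) := by
    funext q; ring
  have iA : Integrable (fun q : ℝ × ℝ =>
      (-(2 * (↑ai : ℂ)) * c) * (mk2 q ^ 1 * conj (mk2 q) ^ 1)) (gprod t) :=
    (gintC t 1 1).const_mul _
  have iB : Integrable (fun q : ℝ × ℝ =>
      (2 * ↑ai * ↑aj * c) * (mk2 q ^ 2 * conj (mk2 q) ^ 2)) (gprod t) :=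
    (gintC t 2 2).const_mul _
  rw [hfun, integral_add iA iB, integral_const_mul, integral_const_mul, m11p, m22]




set_option maxHeartbeats 2000000 in
/-- For jointly circularly-symmetric complex Gaussians `uᵢ, uⱼ` with moments
`ρᵢᵢ, ρⱼⱼ > 0` and cross-moment `ρᵢⱼ`, the outputs of the third-order
nonlinearities `gₘ(u) = u − aₘ|u|²u` satisfy
`E[gᵢ(uᵢ) · conj(gⱼ(uⱼ))] = (1 − 2aᵢρᵢᵢ) ρᵢⱼ (1 − 2aⱼρⱼⱼ) + 2 aᵢ aⱼ |ρᵢⱼ|² ρᵢⱼ`. -/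
theorem output_correlation_third_order {Ω : Type*} [MeasurableSpace Ω]
    (μ : Measure Ω) [IsProbabilityMeasure μ] (ui uj ε : Ω → ℂ)
    (ρii ρjj ai aj : ℝ) (ρij : ℂ)
    (hui : Measurable ui) (huj : Measurable uj)
    (hρii : 0 < ρii) (hρjj : 0 < ρjj)
    (hGaussj : IsCircGaussian μ uj ρjj)
    (hvarj : ∫ ω, Complex.normSq (uj ω) ∂μ = ρjj)
    (hvari : ∫ ω, Complex.normSq (ui ω) ∂μ = ρii)
    (hcross : ∫ ω, ui ω * conj (uj ω) ∂μ = ρij)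
    (hrep : ∀ ω, ui ω = ρij / (ρjj : ℂ) * uj ω + ε ω)
    (hεGauss : IsCircGaussian μ ε (ρii - Complex.normSq ρij / ρjj))
    (hεind : IndepFun ε uj μ) :
    ∫ ω, thirdOrderNL ai (ui ω) * conj (thirdOrderNL aj (uj ω)) ∂μ
      = ((1 : ℂ) - 2 * (ai : ℂ) * (ρii : ℂ)) * ρij * ((1 : ℂ) - 2 * (aj : ℂ) * (ρjj : ℂ))
        + 2 * (ai : ℂ) * (aj : ℂ) * (Complex.normSq ρij : ℂ) * ρij := by
  have hρjjR : ρjj ≠ 0 := ne_of_gt hρjj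
  have hρjjC : (ρjj : ℂ) ≠ 0 := by exact_mod_cast hρjjR
  set c : ℂ := ρij / (ρjj : ℂ) with hc
  set t1 : NNReal := Real.toNNReal (ρjj / 2) with ht1def
  set t2 : NNReal := Real.toNNReal ((ρii - Complex.normSq ρij / ρjj) / 2) with ht2def
  have hεmeas : Measurable ε := by
    have hεeq : ε = fun ω => ui ω - c * uj ω := by
      funext ω; rw [hrep ω]; ring
    rw [hεeq]; exact hui.sub (huj.const_mul c)
  set P : Measure ((ℝ × ℝ) × (ℝ × ℝ)) := (gprod t2).prod (gprod t1) with hP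
  -- joint law
  have hlaw : μ.map (fun ω => (ε ω, uj ω))
      = P.map (fun p : (ℝ × ℝ) × (ℝ × ℝ) => (mk2 p.1, mk2 p.2)) := by
    rw [(indepFun_iff_map_prod_eq_prod_map_map hεmeas.aemeasurable huj.aemeasurable).mp hεind,
      circ_law hεmeas hεGauss, circ_law huj hGaussj,
      Measure.map_prod_map _ _ measurable_mk2 measurable_mk2]
    rfl
  have hm2 : Measurable (fun p : (ℝ × ℝ) × (ℝ × ℝ) => (mk2 p.1, mk2 p.2)) :=
    (measurable_mk2.comp measurable_fst).prodMk (measurable_mk2.comp measurable_snd)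
  have hpairm : Measurable (fun ω => (ε ω, uj ω)) := hεmeas.prodMk huj
  have covC : ∀ F : ℂ × ℂ → ℂ, Continuous F →
      ∫ ω, F (ε ω, uj ω) ∂μ = ∫ p, F (mk2 p.1, mk2 p.2) ∂P := by
    intro F hF
    rw [← integral_map hpairm.aemeasurable hF.aestronglyMeasurable, hlaw,
      integral_map hm2.aemeasurable hF.aestronglyMeasurable]
  have covR : ∀ F : ℂ × ℂ → ℝ, Continuous F →
      ∫ ω, F (ε ω, uj ω) ∂μ = ∫ p, F (mk2 p.1, mk2 p.2) ∂P := by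
    intro F hF
    rw [← integral_map hpairm.aemeasurable hF.aestronglyMeasurable, hlaw,
      integral_map hm2.aemeasurable hF.aestronglyMeasurable]
  -- variance relation: 2 t2 = ρii - normSq ρij / ρjj
  have ht1R : (t1 : ℝ) = ρjj / 2 := Real.coe_toNNReal _ (by linarith)
  have hkeyR : ρii = Complex.normSq c * ρjj + 2 * (t2 : ℝ) := by
    have hcont : Continuous (fun z : ℂ × ℂ => Complex.normSq (c * z.2 + z.1)) :=
      Complex.continuous_normSq.comp ((continuous_const.mul continuous_snd).add continuous_fst)
    have hstep1 : ∫ ω, Complex.normSq (ui ω) ∂μ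
        = ∫ ω, (fun z : ℂ × ℂ => Complex.normSq (c * z.2 + z.1)) (ε ω, uj ω) ∂μ := by
      congr 1; funext ω; rw [hrep ω]
    have hstep2 := covR _ hcont
    -- pointwise decomposition on P
    have hps : ∀ p : (ℝ × ℝ) × (ℝ × ℝ),
        Complex.normSq (c * mk2 p.2 + mk2 p.1)
          = Complex.normSq c * Complex.normSq (mk2 p.2) + Complex.normSq (mk2 p.1)
            + 2 * (conj (mk2 p.1) * (c * mk2 p.2)).re := by
      intro p
      rw [Complex.normSq_add, Complex.normSq_mul, mul_comm (c * mk2 p.2) (conj (mk2 p.1))]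
    have h0t1 : Integrable (fun q : ℝ × ℝ => Complex.normSq (mk2 q)) (gprod t1) := by
      simpa using int_nsq t1 1
    have h0t2 : Integrable (fun q : ℝ × ℝ => Complex.normSq (mk2 q)) (gprod t2) := by
      simpa using int_nsq t2 1
    have hone2 : Integrable (fun _ : ℝ × ℝ => (1 : ℝ)) (gprod t2) := integrable_const 1
    have hone1 : Integrable (fun _ : ℝ × ℝ => (1 : ℝ)) (gprod t1) := integrable_const 1
    have iA : Integrable (fun p : (ℝ × ℝ) × (ℝ × ℝ) =>
        Complex.normSq c * Complex.normSq (mk2 p.2)) P := by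
      have := (hone2.mul_prod h0t1).const_mul (Complex.normSq c)
      simpa using this
    have iB : Integrable (fun p : (ℝ × ℝ) × (ℝ × ℝ) => Complex.normSq (mk2 p.1)) P := by
      have := h0t2.mul_prod hone1
      simpa using this
    have iX : Integrable (fun p : (ℝ × ℝ) × (ℝ × ℝ) =>
        conj (mk2 p.1) * (c * mk2 p.2)) P := by
      have := (gintC t2 0 1).mul_prod ((gintC t1 1 0).const_mul c)
      simpa using this
    have iC : Integrable (fun p : (ℝ × ℝ) × (ℝ × ℝ) =>
        2 * (conj (mk2 p.1) * (c * mk2 p.2)).re) P := by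
      have := iX.re.const_mul (2 : ℝ)
      simpa [RCLike.re_to_complex] using this
    have iAB : Integrable (fun p : (ℝ × ℝ) × (ℝ × ℝ) =>
        Complex.normSq c * Complex.normSq (mk2 p.2) + Complex.normSq (mk2 p.1)) P :=
      iA.add iB
    have hXval : ∫ p, conj (mk2 p.1) * (c * mk2 p.2) ∂P = 0 := by
      rw [hP, integral_prod_mul (fun q => conj (mk2 q)) (fun q => c * mk2 q), z_ce]
      exact zero_mul _
    have hCval : ∫ p, 2 * (conj (mk2 p.1) * (c * mk2 p.2)).re ∂P = 0 := by
      rw [integral_const_mul]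
      have hre := integral_re iX (𝕜 := ℂ)
      simp only [RCLike.re_to_complex] at hre
      rw [hre, hXval]
      simp
    have hAval : ∫ p, Complex.normSq c * Complex.normSq (mk2 p.2) ∂P
        = Complex.normSq c * (2 * (t1 : ℝ)) := by
      rw [integral_const_mul]
      have : ∫ p : (ℝ × ℝ) × (ℝ × ℝ), Complex.normSq (mk2 p.2) ∂P
          = ∫ q, Complex.normSq (mk2 q) ∂(gprod t1) := by
        rw [integral_fun_snd (fun q => Complex.normSq (mk2 q))]
        simp
      rw [this, nsq1]
    have hBval : ∫ p, Complex.normSq (mk2 p.1) ∂P = 2 * (t2 : ℝ) := by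
      have : ∫ p : (ℝ × ℝ) × (ℝ × ℝ), Complex.normSq (mk2 p.1) ∂P
          = ∫ q, Complex.normSq (mk2 q) ∂(gprod t2) := by
        rw [integral_fun_fst (fun q => Complex.normSq (mk2 q))]
        simp
      rw [this, nsq1]
    have hbig : ∫ p, Complex.normSq (c * mk2 p.2 + mk2 p.1) ∂P
        = Complex.normSq c * (2 * (t1 : ℝ)) + 2 * (t2 : ℝ) := by
      calc ∫ p, Complex.normSq (c * mk2 p.2 + mk2 p.1) ∂P
          = ∫ p, (Complex.normSq c * Complex.normSq (mk2 p.2) + Complex.normSq (mk2 p.1))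
              + 2 * (conj (mk2 p.1) * (c * mk2 p.2)).re ∂P := by
            congr 1; funext p; rw [hps p]
        _ = (∫ p, Complex.normSq c * Complex.normSq (mk2 p.2) + Complex.normSq (mk2 p.1) ∂P)
              + ∫ p, 2 * (conj (mk2 p.1) * (c * mk2 p.2)).re ∂P := integral_add iAB iC
        _ = _ := by
            rw [integral_add iA iB, hAval, hBval, hCval]; ring
    have hkey : ρii = Complex.normSq c * (2 * (t1 : ℝ)) + 2 * (t2 : ℝ) := by
      rw [← hvari, hstep1, hstep2]
      exact hbig
    rw [ht1R] at hkey
    rw [hkey]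
    ring
  -- main computation
  have hNL : ∀ a : ℝ, Continuous (fun u : ℂ => thirdOrderNL a u) := by
    intro a
    unfold thirdOrderNL
    exact continuous_id.sub ((continuous_const.mul
      (Complex.continuous_ofReal.comp Complex.continuous_normSq)).mul continuous_id)
  set G : ℂ × ℂ → ℂ := fun z => thirdOrderNL ai (c * z.2 + z.1) * conj (thirdOrderNL aj z.2)
    with hG
  have hGcont : Continuous G := by
    rw [hG]
    exact ((hNL ai).comp ((continuous_const.mul continuous_snd).add continuous_fst)).mul
      (Complex.continuous_conj.comp ((hNL aj).comp continuous_snd))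
  have step1 : ∫ ω, thirdOrderNL ai (ui ω) * conj (thirdOrderNL aj (uj ω)) ∂μ
      = ∫ ω, G (ε ω, uj ω) ∂μ := by
    congr 1; funext ω; rw [hG, hrep ω]
  rw [step1, covC G hGcont]
  -- expand pointwise
  have hexp : (fun p : (ℝ × ℝ) × (ℝ × ℝ) => G (mk2 p.1, mk2 p.2))
      = fun p : (ℝ × ℝ) × (ℝ × ℝ) =>
        ((c * mk2 p.2 - ↑ai * c ^ 2 * conj c * ((mk2 p.2) ^ 2 * conj (mk2 p.2)))
          * (conj (mk2 p.2) - ↑aj * (mk2 p.2 * (conj (mk2 p.2)) ^ 2)))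
        + mk2 p.1 * ((1 - 2 * ↑ai * c * conj c * (mk2 p.2 * conj (mk2 p.2)))
          * (conj (mk2 p.2) - ↑aj * (mk2 p.2 * (conj (mk2 p.2)) ^ 2)))
        + conj (mk2 p.1) * ((-(↑ai : ℂ) * c ^ 2 * (mk2 p.2) ^ 2)
          * (conj (mk2 p.2) - ↑aj * (mk2 p.2 * (conj (mk2 p.2)) ^ 2)))
        + (mk2 p.1 * conj (mk2 p.1)) * ((-(2 * (↑ai : ℂ)) * c * mk2 p.2)
          * (conj (mk2 p.2) - ↑aj * (mk2 p.2 * (conj (mk2 p.2)) ^ 2)))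
        + (mk2 p.1) ^ 2 * ((-(↑ai : ℂ) * conj c * conj (mk2 p.2))
          * (conj (mk2 p.2) - ↑aj * (mk2 p.2 * (conj (mk2 p.2)) ^ 2)))
        + ((mk2 p.1) ^ 2 * conj (mk2 p.1)) * ((-(↑ai : ℂ))
          * (conj (mk2 p.2) - ↑aj * (mk2 p.2 * (conj (mk2 p.2)) ^ 2))) := by
    funext p
    rw [hG]
    exact expand_pt ai aj c (mk2 p.1) (mk2 p.2)
  rw [hexp]
  -- integrability of the factors in w
  have ig1 : Integrable (fun q : ℝ × ℝ =>
      (c * mk2 q - ↑ai * c ^ 2 * conj c * ((mk2 q) ^ 2 * conj (mk2 q)))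
        * (conj (mk2 q) - ↑aj * (mk2 q * (conj (mk2 q)) ^ 2))) (gprod t1) := by
    refine ((((gintC t1 1 1).const_mul c).add
      ((gintC t1 2 2).const_mul (-(↑aj * c) - ↑ai * c ^ 2 * conj c))).add
      ((gintC t1 3 3).const_mul (↑ai * ↑aj * c ^ 2 * conj c))).congr
      (Eventually.of_forall fun q => ?_)
    simp only [Pi.add_apply]; ring
  have ig2 : Integrable (fun q : ℝ × ℝ =>
      (1 - 2 * ↑ai * c * conj c * (mk2 q * conj (mk2 q)))
        * (conj (mk2 q) - ↑aj * (mk2 q * (conj (mk2 q)) ^ 2))) (gprod t1) := by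
    refine ((((gintC t1 0 1).const_mul 1).add
      ((gintC t1 1 2).const_mul (-(↑aj : ℂ) - 2 * ↑ai * c * conj c))).add
      ((gintC t1 2 3).const_mul (2 * ↑ai * ↑aj * c * conj c))).congr
      (Eventually.of_forall fun q => ?_)
    simp only [Pi.add_apply]; ring
  have ig3 : Integrable (fun q : ℝ × ℝ =>
      (-(↑ai : ℂ) * c ^ 2 * (mk2 q) ^ 2)
        * (conj (mk2 q) - ↑aj * (mk2 q * (conj (mk2 q)) ^ 2))) (gprod t1) := by
    refine (((gintC t1 2 1).const_mul (-(↑ai : ℂ) * c ^ 2)).add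
      ((gintC t1 3 2).const_mul (↑ai * ↑aj * c ^ 2))).congr
      (Eventually.of_forall fun q => ?_)
    simp only [Pi.add_apply]; ring
  have ig4 : Integrable (fun q : ℝ × ℝ =>
      (-(2 * (↑ai : ℂ)) * c * mk2 q)
        * (conj (mk2 q) - ↑aj * (mk2 q * (conj (mk2 q)) ^ 2))) (gprod t1) := by
    refine (((gintC t1 1 1).const_mul (-(2 * (↑ai : ℂ)) * c)).add
      ((gintC t1 2 2).const_mul (2 * ↑ai * ↑aj * c))).congr
      (Eventually.of_forall fun q => ?_)
    simp only [Pi.add_apply]; ring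
  have ig5 : Integrable (fun q : ℝ × ℝ =>
      (-(↑ai : ℂ) * conj c * conj (mk2 q))
        * (conj (mk2 q) - ↑aj * (mk2 q * (conj (mk2 q)) ^ 2))) (gprod t1) := by
    refine (((gintC t1 0 2).const_mul (-(↑ai : ℂ) * conj c)).add
      ((gintC t1 1 3).const_mul (↑ai * ↑aj * conj c))).congr
      (Eventually.of_forall fun q => ?_)
    simp only [Pi.add_apply]; ring
  have ig6 : Integrable (fun q : ℝ × ℝ =>
      (-(↑ai : ℂ)) * (conj (mk2 q) - ↑aj * (mk2 q * (conj (mk2 q)) ^ 2))) (gprod t1) := by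
    refine (((gintC t1 0 1).const_mul (-(↑ai : ℂ))).add
      ((gintC t1 1 2).const_mul (↑ai * ↑aj))).congr
      (Eventually.of_forall fun q => ?_)
    simp only [Pi.add_apply]; ring
  -- integrability of e-monomials
  have ie1 : Integrable (fun q : ℝ × ℝ => mk2 q) (gprod t2) := by
    simpa using gintC t2 1 0
  have ie2 : Integrable (fun q : ℝ × ℝ => conj (mk2 q)) (gprod t2) := by
    simpa using gintC t2 0 1
  have ie3 : Integrable (fun q : ℝ × ℝ => mk2 q * conj (mk2 q)) (gprod t2) := by
    simpa using gintC t2 1 1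
  have ie4 : Integrable (fun q : ℝ × ℝ => (mk2 q) ^ 2) (gprod t2) := by
    simpa using gintC t2 2 0
  have ie5 : Integrable (fun q : ℝ × ℝ => (mk2 q) ^ 2 * conj (mk2 q)) (gprod t2) := by
    simpa using gintC t2 2 1
  -- integrability of the six terms on P
  have honec : Integrable (fun _ : ℝ × ℝ => (1 : ℂ)) (gprod t2) := integrable_const 1
  have iT1 : Integrable (fun p : (ℝ × ℝ) × (ℝ × ℝ) =>
      (c * mk2 p.2 - ↑ai * c ^ 2 * conj c * ((mk2 p.2) ^ 2 * conj (mk2 p.2)))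
        * (conj (mk2 p.2) - ↑aj * (mk2 p.2 * (conj (mk2 p.2)) ^ 2))) P := by
    have := honec.mul_prod ig1
    simpa using this
  have iT2 : Integrable (fun p : (ℝ × ℝ) × (ℝ × ℝ) =>
      mk2 p.1 * ((1 - 2 * ↑ai * c * conj c * (mk2 p.2 * conj (mk2 p.2)))
        * (conj (mk2 p.2) - ↑aj * (mk2 p.2 * (conj (mk2 p.2)) ^ 2)))) P :=
    ie1.mul_prod ig2
  have iT3 : Integrable (fun p : (ℝ × ℝ) × (ℝ × ℝ) =>
      conj (mk2 p.1) * ((-(↑ai : ℂ) * c ^ 2 * (mk2 p.2) ^ 2)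
        * (conj (mk2 p.2) - ↑aj * (mk2 p.2 * (conj (mk2 p.2)) ^ 2)))) P :=
    ie2.mul_prod ig3
  have iT4 : Integrable (fun p : (ℝ × ℝ) × (ℝ × ℝ) =>
      (mk2 p.1 * conj (mk2 p.1)) * ((-(2 * (↑ai : ℂ)) * c * mk2 p.2)
        * (conj (mk2 p.2) - ↑aj * (mk2 p.2 * (conj (mk2 p.2)) ^ 2)))) P :=
    ie3.mul_prod ig4
  have iT5 : Integrable (fun p : (ℝ × ℝ) × (ℝ × ℝ) =>
      (mk2 p.1) ^ 2 * ((-(↑ai : ℂ) * conj c * conj (mk2 p.2))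
        * (conj (mk2 p.2) - ↑aj * (mk2 p.2 * (conj (mk2 p.2)) ^ 2)))) P :=
    ie4.mul_prod ig5
  have iT6 : Integrable (fun p : (ℝ × ℝ) × (ℝ × ℝ) =>
      ((mk2 p.1) ^ 2 * conj (mk2 p.1)) * ((-(↑ai : ℂ))
        * (conj (mk2 p.2) - ↑aj * (mk2 p.2 * (conj (mk2 p.2)) ^ 2)))) P :=
    ie5.mul_prod ig6
  have iS2 : Integrable (fun p : (ℝ × ℝ) × (ℝ × ℝ) =>
      (c * mk2 p.2 - ↑ai * c ^ 2 * conj c * ((mk2 p.2) ^ 2 * conj (mk2 p.2)))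
        * (conj (mk2 p.2) - ↑aj * (mk2 p.2 * (conj (mk2 p.2)) ^ 2))
      + mk2 p.1 * ((1 - 2 * ↑ai * c * conj c * (mk2 p.2 * conj (mk2 p.2)))
        * (conj (mk2 p.2) - ↑aj * (mk2 p.2 * (conj (mk2 p.2)) ^ 2)))) P := iT1.add iT2
  have iS3 : Integrable (fun p : (ℝ × ℝ) × (ℝ × ℝ) =>
      (c * mk2 p.2 - ↑ai * c ^ 2 * conj c * ((mk2 p.2) ^ 2 * conj (mk2 p.2)))
        * (conj (mk2 p.2) - ↑aj * (mk2 p.2 * (conj (mk2 p.2)) ^ 2))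
      + mk2 p.1 * ((1 - 2 * ↑ai * c * conj c * (mk2 p.2 * conj (mk2 p.2)))
        * (conj (mk2 p.2) - ↑aj * (mk2 p.2 * (conj (mk2 p.2)) ^ 2)))
      + conj (mk2 p.1) * ((-(↑ai : ℂ) * c ^ 2 * (mk2 p.2) ^ 2)
        * (conj (mk2 p.2) - ↑aj * (mk2 p.2 * (conj (mk2 p.2)) ^ 2)))) P := iS2.add iT3
  have iS4 : Integrable (fun p : (ℝ × ℝ) × (ℝ × ℝ) =>
      (c * mk2 p.2 - ↑ai * c ^ 2 * conj c * ((mk2 p.2) ^ 2 * conj (mk2 p.2)))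
        * (conj (mk2 p.2) - ↑aj * (mk2 p.2 * (conj (mk2 p.2)) ^ 2))
      + mk2 p.1 * ((1 - 2 * ↑ai * c * conj c * (mk2 p.2 * conj (mk2 p.2)))
        * (conj (mk2 p.2) - ↑aj * (mk2 p.2 * (conj (mk2 p.2)) ^ 2)))
      + conj (mk2 p.1) * ((-(↑ai : ℂ) * c ^ 2 * (mk2 p.2) ^ 2)
        * (conj (mk2 p.2) - ↑aj * (mk2 p.2 * (conj (mk2 p.2)) ^ 2)))
      + (mk2 p.1 * conj (mk2 p.1)) * ((-(2 * (↑ai : ℂ)) * c * mk2 p.2)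
        * (conj (mk2 p.2) - ↑aj * (mk2 p.2 * (conj (mk2 p.2)) ^ 2)))) P := iS3.add iT4
  have iS5 : Integrable (fun p : (ℝ × ℝ) × (ℝ × ℝ) =>
      (c * mk2 p.2 - ↑ai * c ^ 2 * conj c * ((mk2 p.2) ^ 2 * conj (mk2 p.2)))
        * (conj (mk2 p.2) - ↑aj * (mk2 p.2 * (conj (mk2 p.2)) ^ 2))
      + mk2 p.1 * ((1 - 2 * ↑ai * c * conj c * (mk2 p.2 * conj (mk2 p.2)))
        * (conj (mk2 p.2) - ↑aj * (mk2 p.2 * (conj (mk2 p.2)) ^ 2)))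
      + conj (mk2 p.1) * ((-(↑ai : ℂ) * c ^ 2 * (mk2 p.2) ^ 2)
        * (conj (mk2 p.2) - ↑aj * (mk2 p.2 * (conj (mk2 p.2)) ^ 2)))
      + (mk2 p.1 * conj (mk2 p.1)) * ((-(2 * (↑ai : ℂ)) * c * mk2 p.2)
        * (conj (mk2 p.2) - ↑aj * (mk2 p.2 * (conj (mk2 p.2)) ^ 2)))
      + (mk2 p.1) ^ 2 * ((-(↑ai : ℂ) * conj c * conj (mk2 p.2))
        * (conj (mk2 p.2) - ↑aj * (mk2 p.2 * (conj (mk2 p.2)) ^ 2)))) P := iS4.add iT5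
  rw [integral_add iS5 iT6, integral_add iS4 iT5, integral_add iS3 iT4,
    integral_add iS2 iT3, integral_add iT1 iT2]
  -- values of the six integrals
  have V1 : ∫ p, (c * mk2 p.2 - ↑ai * c ^ 2 * conj c * ((mk2 p.2) ^ 2 * conj (mk2 p.2)))
        * (conj (mk2 p.2) - ↑aj * (mk2 p.2 * (conj (mk2 p.2)) ^ 2)) ∂P
      = c * ((2 * (t1 : ℝ) : ℝ) : ℂ)
        + (-(↑aj * c) - ↑ai * c ^ 2 * conj c) * ((8 * (t1 : ℝ) ^ 2 : ℝ) : ℂ)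
        + (↑ai * ↑aj * c ^ 2 * conj c) * ((48 * (t1 : ℝ) ^ 3 : ℝ) : ℂ) := by
    have hfs := integral_fun_snd (μ := gprod t2) (ν := gprod t1)
      (fun q => (c * mk2 q - ↑ai * c ^ 2 * conj c * ((mk2 q) ^ 2 * conj (mk2 q)))
        * (conj (mk2 q) - ↑aj * (mk2 q * (conj (mk2 q)) ^ 2)))
    rw [hP, hfs]
    simp only [probReal_univ, one_smul]
    exact inner1 t1 ai aj c
  have V2 : ∫ p, mk2 p.1 * ((1 - 2 * ↑ai * c * conj c * (mk2 p.2 * conj (mk2 p.2)))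
        * (conj (mk2 p.2) - ↑aj * (mk2 p.2 * (conj (mk2 p.2)) ^ 2))) ∂P = 0 := by
    rw [hP, integral_prod_mul (fun q => mk2 q)
      (fun q => (1 - 2 * ↑ai * c * conj c * (mk2 q * conj (mk2 q)))
        * (conj (mk2 q) - ↑aj * (mk2 q * (conj (mk2 q)) ^ 2))), z_e]
    exact zero_mul _
  have V3 : ∫ p, conj (mk2 p.1) * ((-(↑ai : ℂ) * c ^ 2 * (mk2 p.2) ^ 2)
        * (conj (mk2 p.2) - ↑aj * (mk2 p.2 * (conj (mk2 p.2)) ^ 2))) ∂P = 0 := by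
    rw [hP, integral_prod_mul (fun q => conj (mk2 q))
      (fun q => (-(↑ai : ℂ) * c ^ 2 * (mk2 q) ^ 2)
        * (conj (mk2 q) - ↑aj * (mk2 q * (conj (mk2 q)) ^ 2))), z_ce]
    exact zero_mul _
  have V4 : ∫ p, (mk2 p.1 * conj (mk2 p.1)) * ((-(2 * (↑ai : ℂ)) * c * mk2 p.2)
        * (conj (mk2 p.2) - ↑aj * (mk2 p.2 * (conj (mk2 p.2)) ^ 2))) ∂P
      = ((2 * (t2 : ℝ) : ℝ) : ℂ) * (-(2 * (↑ai : ℂ)) * c * ((2 * (t1 : ℝ) : ℝ) : ℂ)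
        + 2 * ↑ai * ↑aj * c * ((8 * (t1 : ℝ) ^ 2 : ℝ) : ℂ)) := by
    rw [hP, integral_prod_mul (fun q => mk2 q * conj (mk2 q))
      (fun q => (-(2 * (↑ai : ℂ)) * c * mk2 q)
        * (conj (mk2 q) - ↑aj * (mk2 q * (conj (mk2 q)) ^ 2))), m11, inner4]
  have V5 : ∫ p, (mk2 p.1) ^ 2 * ((-(↑ai : ℂ) * conj c * conj (mk2 p.2))
        * (conj (mk2 p.2) - ↑aj * (mk2 p.2 * (conj (mk2 p.2)) ^ 2))) ∂P = 0 := by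
    rw [hP, integral_prod_mul (fun q => (mk2 q) ^ 2)
      (fun q => (-(↑ai : ℂ) * conj c * conj (mk2 q))
        * (conj (mk2 q) - ↑aj * (mk2 q * (conj (mk2 q)) ^ 2))), z_e2]
    exact zero_mul _
  have V6 : ∫ p, ((mk2 p.1) ^ 2 * conj (mk2 p.1)) * ((-(↑ai : ℂ))
        * (conj (mk2 p.2) - ↑aj * (mk2 p.2 * (conj (mk2 p.2)) ^ 2))) ∂P = 0 := by
    rw [hP, integral_prod_mul (fun q => (mk2 q) ^ 2 * conj (mk2 q))
      (fun q => (-(↑ai : ℂ))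
        * (conj (mk2 q) - ↑aj * (mk2 q * (conj (mk2 q)) ^ 2))), z_e2ce]
    exact zero_mul _
  rw [V1, V2, V3, V4, V5, V6]
  -- final algebra
  have hct1 : ((t1 : ℝ) : ℂ) = (ρjj : ℂ) / 2 := by
    rw [ht1R]; push_cast; ring
  have hnsq : (Complex.normSq ρij : ℂ) = ρij * conj ρij := (Complex.mul_conj ρij).symm
  have hρijc : ρij = c * (ρjj : ℂ) := by
    rw [hc]; field_simp
  have hρiiC : (ρii : ℂ) = c * conj c * (ρjj : ℂ) + 2 * ((t2 : ℝ) : ℂ) := by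
    calc (ρii : ℂ) = ((Complex.normSq c * ρjj + 2 * (t2 : ℝ) : ℝ) : ℂ) := by
          rw [← hkeyR]
      _ = ((Complex.normSq c : ℝ) : ℂ) * (ρjj : ℂ) + 2 * ((t2 : ℝ) : ℂ) := by push_cast; ring
      _ = c * conj c * (ρjj : ℂ) + 2 * ((t2 : ℝ) : ℂ) := by rw [← Complex.mul_conj]
  push_cast
  rw [hnsq, hρijc, map_mul, Complex.conj_ofReal, hρiiC, hct1]
  ring
end

section
/- Let ξ_u = ρ_ij/√(ρ_ii ρ_jj) be the correlation coefficient of the Gaussian signals and ξ_η the correlation coefficient of the distortions η_i, η_j arising from the third-order nonlinearity with a_i, a_j > 0. Then ξ_η = |ξ_u|^2 · ξ_u, and in particular |ξ_η| = |ξ_u|^3 ≤ |ξ_u|. -/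
open Complex

/-- For the third-order nonlinearity, with `E[ηᵢ η̄ⱼ] = 2aᵢaⱼ|ρᵢⱼ|²ρᵢⱼ` and
`E[|ηₘ|²] = 2aₘ²ρₘₘ³`, the correlation coefficient of the distortions equals
`|ξᵤ|² ξᵤ` where `ξᵤ = ρᵢⱼ/√(ρᵢᵢρⱼⱼ)` is the correlation coefficient of the
signals; in particular `|ξ_η| = |ξᵤ|³ ≤ |ξᵤ|`. -/
theorem distortion_correlation_coefficient (ρii ρjj ai aj : ℝ) (ρij : ℂ)
    (hρii : 0 < ρii) (hρjj : 0 < ρjj) (hai : 0 < ai) (haj : 0 < aj)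
    (hCS : ‖ρij‖ ≤ Real.sqrt (ρii * ρjj)) :
    let ξu : ℂ := ρij / (Real.sqrt (ρii * ρjj) : ℂ)
    let ξη : ℂ := (2 * (ai : ℂ) * (aj : ℂ) * (Complex.normSq ρij : ℂ) * ρij)
      / ((Real.sqrt ((2 * ai ^ 2 * ρii ^ 3) * (2 * aj ^ 2 * ρjj ^ 3)) : ℝ) : ℂ)
    ξη = (Complex.normSq ξu : ℂ) * ξu ∧ ‖ξη‖ = ‖ξu‖ ^ 3 ∧ ‖ξη‖ ≤ ‖ξu‖ := by
  intro ξu ξη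
  set s : ℝ := Real.sqrt (ρii * ρjj) with hs
  have hspos : 0 < s := Real.sqrt_pos.mpr (mul_pos hρii hρjj)
  have hs2 : s ^ 2 = ρii * ρjj := Real.sq_sqrt (mul_pos hρii hρjj).le
  have hsqrt : Real.sqrt ((2 * ai ^ 2 * ρii ^ 3) * (2 * aj ^ 2 * ρjj ^ 3))
      = 2 * ai * aj * s ^ 3 := by
    have h6 : s ^ 6 = (ρii * ρjj) ^ 3 := by
      rw [show s ^ 6 = (s ^ 2) ^ 3 by ring, hs2]
    have h : (2 * ai ^ 2 * ρii ^ 3) * (2 * aj ^ 2 * ρjj ^ 3)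
        = (2 * ai * aj * s ^ 3) ^ 2 := by
      linear_combination (-4 * ai ^ 2 * aj ^ 2) * h6
    rw [h, Real.sqrt_sq (by positivity)]
  have hsne : (s : ℂ) ≠ 0 := by exact_mod_cast hspos.ne'
  have haine : (ai : ℂ) ≠ 0 := by exact_mod_cast hai.ne'
  have hajne : (aj : ℂ) ≠ 0 := by exact_mod_cast haj.ne'
  have hnormu : Complex.normSq ξu = Complex.normSq ρij / s ^ 2 := by
    simp [ξu, Complex.normSq_div, Complex.normSq_ofReal, sq, ← hs]
  have h1 : ξη = (Complex.normSq ξu : ℂ) * ξu := by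
    rw [hnormu]
    simp only [ξη, ξu, hsqrt, hnormu, ← hs, Complex.ofReal_mul,
      Complex.ofReal_div, Complex.ofReal_pow, Complex.ofReal_ofNat]
    field_simp
  have hxu : ‖ξu‖ = ‖ρij‖ / s := by
    simp [ξu, norm_div, Complex.norm_real, abs_of_pos hspos, ← hs]
  have hn : ‖ξη‖ = ‖ξu‖ ^ 3 := by
    rw [h1, norm_mul, Complex.norm_real, Real.norm_eq_abs,
      _root_.abs_of_nonneg (Complex.normSq_nonneg _), Complex.normSq_eq_norm_sq]
    ring
  refine ⟨h1, hn, ?_⟩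
  rw [hn]
  have hle1 : ‖ξu‖ ≤ 1 := by
    rw [hxu, div_le_one hspos]; exact hCS
  calc ‖ξu‖ ^ 3 = ‖ξu‖ ^ 2 * ‖ξu‖ := by ring
    _ ≤ 1 * ‖ξu‖ := by
        have : ‖ξu‖ ^ 2 ≤ 1 := by nlinarith [norm_nonneg ξu]
        nlinarith [norm_nonneg ξu]
    _ = ‖ξu‖ := one_mul _
end

section
/- In the same i.i.d. Rayleigh fading setup, with C_{ηη}^{diag} = C_{ηη} ⊙ I_M the diagonal of the third-order distortion correlation matrix, E[h_k^H C_{ηη}^{diag} h_k] / E[‖h_k‖^2] = (2 α^2 p / b^2) · (K + 6 + 11/K + 6/K^2). -/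
open MeasureTheory ProbabilityTheory Complex ComplexConjugate Matrix

/-- A random `M × K` complex matrix with i.i.d. `CN(0,1)` entries. -/
def IidStdCGaussianMatrix {Ω : Type*} [MeasurableSpace Ω] {M K : ℕ} (μ : Measure Ω)
    (H : Ω → Matrix (Fin M) (Fin K) ℂ) : Prop :=
  iIndepFun (fun (q : Fin M × Fin K) ω => H ω q.1 q.2) μ ∧
  ∀ q : Fin M × Fin K, IsCircGaussian μ (fun ω => H ω q.1 q.2) 1

namespace DistortionAux
open Real


lemma integral_pow_exp_neg_sq (n : ℕ) :
    ∫ x : ℝ, x ^ (2 * n) * Real.exp (-x ^ 2) = Real.Gamma (n + 1/2) := by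
  have h1 : ∀ x : ℝ, x ^ (2 * n) * Real.exp (-x ^ 2)
      = (fun t : ℝ => t ^ (2 * n) * Real.exp (-t ^ 2)) |x| := by
    intro x
    simp [pow_mul, sq_abs]
  rw [MeasureTheory.integral_congr_ae (Filter.Eventually.of_forall h1),
    integral_comp_abs (f := fun t : ℝ => t ^ (2 * n) * Real.exp (-t ^ 2))]
  have h2 : ∀ x ∈ Set.Ioi (0:ℝ), x ^ (2*n) * Real.exp (-x^2)
      = x ^ ((2*n : ℕ) : ℝ) * Real.exp (-x ^ (2:ℝ)) := by
    intro x hx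
    rw [Real.rpow_natCast, Real.rpow_two]
  rw [MeasureTheory.setIntegral_congr_fun measurableSet_Ioi h2,
    _root_.integral_rpow_mul_exp_neg_rpow (by norm_num) (lt_of_lt_of_le neg_one_lt_zero (Nat.cast_nonneg _))]
  rw [show (((2*n : ℕ):ℝ) + 1)/2 = (n : ℝ) + 1/2 by push_cast; ring]
  ring

noncomputable def halfVar : NNReal := Real.toNNReal (1/2)

lemma halfVar_ne : halfVar ≠ 0 := by
  rw [halfVar, Ne, Real.toNNReal_eq_zero]
  norm_num

lemma gaussianHalf_eq : gaussianReal 0 halfVar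
    = volume.withDensity (fun x => ENNReal.ofReal ((Real.sqrt π)⁻¹ * Real.exp (-x^2))) := by
  rw [gaussianReal_of_var_ne_zero 0 halfVar_ne]
  congr 1
  ext x
  rw [gaussianPDF, gaussianPDFReal]
  congr 2
  · congr 1
    rw [show (2 : ℝ) * π * (halfVar : ℝ) = π by
      simp [halfVar, Real.coe_toNNReal _ (by norm_num : (0:ℝ) ≤ 1/2)]; ring]
  · rw [show (2 : ℝ) * (halfVar : ℝ) = 1 by
      simp [halfVar, Real.coe_toNNReal _ (by norm_num : (0:ℝ) ≤ 1/2)]]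
    simp

lemma integral_gaussianHalf (f : ℝ → ℝ) :
    ∫ x, f x ∂(gaussianReal 0 halfVar)
      = (Real.sqrt π)⁻¹ * ∫ x, f x * Real.exp (-x^2) := by
  rw [gaussianHalf_eq]
  have : (fun x => ENNReal.ofReal ((Real.sqrt π)⁻¹ * Real.exp (-x^2)))
      = (fun x => (((Real.toNNReal ((Real.sqrt π)⁻¹ * Real.exp (-x^2))) : NNReal) : ENNReal)) := by
    ext x; rw [ENNReal.ofReal]
  rw [this, integral_withDensity_eq_integral_smul
    (by fun_prop : Measurable fun x : ℝ => Real.toNNReal ((Real.sqrt π)⁻¹ * Real.exp (-x^2)))]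
  rw [← integral_const_mul]
  apply integral_congr_ae
  apply Filter.Eventually.of_forall
  intro x
  simp only [NNReal.smul_def, smul_eq_mul]
  rw [Real.coe_toNNReal _ (by positivity)]
  ring

lemma integrable_pow_gaussianHalf (m : ℕ) :
    Integrable (fun x : ℝ => x ^ m) (gaussianReal 0 halfVar) := by
  rw [gaussianHalf_eq]
  have h : (fun x => ENNReal.ofReal ((Real.sqrt π)⁻¹ * Real.exp (-x^2)))
      = (fun x => (((Real.toNNReal ((Real.sqrt π)⁻¹ * Real.exp (-x^2))) : NNReal) : ENNReal)) := by
    ext x; rw [ENNReal.ofReal]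
  rw [h, integrable_withDensity_iff_integrable_smul
    (by fun_prop : Measurable fun x : ℝ => Real.toNNReal ((Real.sqrt π)⁻¹ * Real.exp (-x^2)))]
  have : (fun x : ℝ => (Real.toNNReal ((Real.sqrt π)⁻¹ * Real.exp (-x^2))) • (x ^ m))
      = fun x : ℝ => (Real.sqrt π)⁻¹ * (x ^ ((m:ℕ):ℝ) * Real.exp (-x^2)) := by
    ext x
    simp only [NNReal.smul_def, smul_eq_mul]
    rw [Real.coe_toNNReal _ (by positivity), Real.rpow_natCast]
    ring
  rw [this]
  exact (integrable_rpow_mul_exp_neg_mul_sq (b := 1) one_pos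
    (s := ((m:ℕ):ℝ)) (lt_of_lt_of_le neg_one_lt_zero (Nat.cast_nonneg _))).congr
    (by apply Filter.Eventually.of_forall; intro x; simp) |>.const_mul _

lemma moment_gaussianHalf (n : ℕ) :
    ∫ x, x ^ (2*n) ∂(gaussianReal 0 halfVar) = Real.Gamma (n + 1/2) / Real.sqrt π := by
  rw [integral_gaussianHalf, integral_pow_exp_neg_sq]
  ring
noncomputable def Gm (j : ℕ) : ℝ := Real.Gamma (j + 1/2) / Real.sqrt π

lemma Gm_succ (j : ℕ) : Gm (j+1) = (j + 1/2) * Gm j := by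
  rw [Gm, Gm]
  push_cast
  rw [show ((j:ℝ)+1+1/2 : ℝ) = ((j:ℝ)+1/2) + 1 by ring,
    Real.Gamma_add_one (by positivity)]
  ring

lemma Gm_zero : Gm 0 = 1 := by
  rw [Gm]
  norm_num [Real.Gamma_one_half_eq]
  exact Real.sqrt_ne_zero'.mpr Real.pi_pos

lemma Gm_one : Gm 1 = 1/2 := by rw [Gm_succ, Gm_zero]; norm_num
lemma Gm_two : Gm 2 = 3/4 := by rw [Gm_succ, Gm_one]; norm_num
lemma Gm_three : Gm 3 = 15/8 := by rw [Gm_succ, Gm_two]; norm_num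
lemma Gm_four : Gm 4 = 105/16 := by rw [Gm_succ, Gm_three]; norm_num

section
variable {Ω : Type*} [MeasurableSpace Ω] {μ : Measure Ω} [IsProbabilityMeasure μ]
  {u : Ω → ℂ} (hu : Measurable u) (hg : IsCircGaussian μ u 1)

include hg in
lemma map_re_eq : μ.map (fun ω => (u ω).re) = gaussianReal 0 halfVar := by
  rw [hg.1]; norm_num [halfVar]

include hg in
lemma map_im_eq : μ.map (fun ω => (u ω).im) = gaussianReal 0 halfVar := by
  rw [hg.2.1]; norm_num [halfVar]

include hu hg in
lemma integrable_re_pow (m : ℕ) : Integrable (fun ω => (u ω).re ^ m) μ := by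
  have h := integrable_pow_gaussianHalf m
  rw [← map_re_eq hg,
    integrable_map_measure (by fun_prop) (by fun_prop)] at h
  exact h

include hu hg in
lemma integrable_im_pow (m : ℕ) : Integrable (fun ω => (u ω).im ^ m) μ := by
  have h := integrable_pow_gaussianHalf m
  rw [← map_im_eq hg,
    integrable_map_measure (by fun_prop) (by fun_prop)] at h
  exact h

include hu hg in
lemma integral_re_pow (j : ℕ) : ∫ ω, (u ω).re ^ (2*j) ∂μ = Gm j := by
  have h := moment_gaussianHalf j
  rw [← map_re_eq hg, integral_map (by fun_prop) (by fun_prop)] at h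
  exact h

include hu hg in
lemma integral_im_pow (j : ℕ) : ∫ ω, (u ω).im ^ (2*j) ∂μ = Gm j := by
  have h := moment_gaussianHalf j
  rw [← map_im_eq hg, integral_map (by fun_prop) (by fun_prop)] at h
  exact h

include hu hg in
lemma indep_re_im_pow (a b : ℕ) :
    IndepFun (fun ω => (u ω).re ^ a) (fun ω => (u ω).im ^ b) μ :=
  hg.2.2.comp (measurable_id.pow_const a) (measurable_id.pow_const b)

include hu hg in
lemma integrable_re_im (a b : ℕ) :
    Integrable (fun ω => (u ω).re ^ a * (u ω).im ^ b) μ :=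
  (indep_re_im_pow hu hg a b).integrable_mul (integrable_re_pow hu hg a) (integrable_im_pow hu hg b)

include hu hg in
lemma integral_re_im (a b : ℕ) :
    ∫ ω, (u ω).re ^ (2*a) * (u ω).im ^ (2*b) ∂μ = Gm a * Gm b := by
  have h := (indep_re_im_pow hu hg (2*a) (2*b)).integral_fun_mul_eq_mul_integral
    (integrable_re_pow hu hg _).1 (integrable_im_pow hu hg _).1
  rw [integral_re_pow hu hg, integral_im_pow hu hg] at h
  exact h

include hu hg in
lemma integrable_normSq_pow (n : ℕ) :
    Integrable (fun ω => Complex.normSq (u ω) ^ n) μ := by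
  have hfun : ∀ ω, Complex.normSq (u ω) ^ n
      = ∑ j ∈ Finset.range (n+1), ((u ω).re ^ (2*j) * (u ω).im ^ (2*(n-j))) * (n.choose j) := by
    intro ω
    rw [Complex.normSq_apply, ← sq, ← sq, add_pow]
    exact Finset.sum_congr rfl fun j hj => by rw [← pow_mul, ← pow_mul]
  rw [show (fun ω => Complex.normSq (u ω) ^ n) = fun ω =>
    ∑ j ∈ Finset.range (n+1), ((u ω).re ^ (2*j) * (u ω).im ^ (2*(n-j))) * (n.choose j)
    from funext hfun]
  exact integrable_finset_sum _ fun j _ => (integrable_re_im hu hg _ _).mul_const _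

include hu hg in
lemma integral_normSq_pow (n : ℕ) :
    ∫ ω, Complex.normSq (u ω) ^ n ∂μ
      = ∑ j ∈ Finset.range (n+1), Gm j * Gm (n-j) * (n.choose j) := by
  have hfun : ∀ ω, Complex.normSq (u ω) ^ n
      = ∑ j ∈ Finset.range (n+1), ((u ω).re ^ (2*j) * (u ω).im ^ (2*(n-j))) * (n.choose j) := by
    intro ω
    rw [Complex.normSq_apply, ← sq, ← sq, add_pow]
    exact Finset.sum_congr rfl fun j hj => by rw [← pow_mul, ← pow_mul]
  rw [show (fun ω => Complex.normSq (u ω) ^ n) = fun ω =>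
    ∑ j ∈ Finset.range (n+1), ((u ω).re ^ (2*j) * (u ω).im ^ (2*(n-j))) * (n.choose j)
    from funext hfun,
    integral_finset_sum _ fun j _ => (integrable_re_im hu hg _ _).mul_const _]
  exact Finset.sum_congr rfl fun j hj => by
    rw [integral_mul_const, integral_re_im hu hg]

include hu hg in
lemma integral_normSq_one : ∫ ω, Complex.normSq (u ω) ∂μ = 1 := by
  have h := integral_normSq_pow hu hg 1
  simp only [pow_one] at h
  rw [h]
  simp [Finset.sum_range_succ, Gm_zero, Gm_one]
  norm_num

include hu hg in
lemma integral_normSq_two : ∫ ω, Complex.normSq (u ω) ^ 2 ∂μ = 2 := by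
  rw [integral_normSq_pow hu hg 2]
  simp [Finset.sum_range_succ, Gm_zero, Gm_one, Gm_two]
  norm_num

include hu hg in
lemma integral_normSq_three : ∫ ω, Complex.normSq (u ω) ^ 3 ∂μ = 6 := by
  rw [integral_normSq_pow hu hg 3]
  simp [Finset.sum_range_succ, Gm_zero, Gm_one, Gm_two, Gm_three]
  norm_num

include hu hg in
lemma integral_normSq_four : ∫ ω, Complex.normSq (u ω) ^ 4 ∂μ = 24 := by
  rw [integral_normSq_pow hu hg 4]
  simp [Finset.sum_range_succ, Gm_zero, Gm_one, Gm_two, Gm_three, Gm_four]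
  norm_num [Nat.choose]

end

lemma meas_normSq : Measurable Complex.normSq :=
  (Complex.measurable_re.mul Complex.measurable_re).add
    (Complex.measurable_im.mul Complex.measurable_im)

section Row
variable {Ω : Type*} [MeasurableSpace Ω] {μ : Measure Ω} [IsProbabilityMeasure μ]
  {M K : ℕ} {H : Ω → Matrix (Fin M) (Fin K) ℂ}
  (hmeas : ∀ i j, Measurable fun ω => H ω i j)
  (hiid : IidStdCGaussianMatrix μ H)

include hiid in
lemma Yindep : iIndepFun
    (fun (q : Fin M × Fin K) => fun ω => Complex.normSq (H ω q.1 q.2)) μ :=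
  hiid.1.comp (fun _ => Complex.normSq) (fun _ => meas_normSq)

include hmeas hiid in
lemma Yintegrable (i : Fin M) (j : Fin K) (n : ℕ) :
    Integrable (fun ω => Complex.normSq (H ω i j) ^ n) μ :=
  integrable_normSq_pow (hmeas i j) (hiid.2 (i, j)) n

include hmeas hiid in
lemma indep_sum_single (i : Fin M) (s : Finset (Fin K)) {a : Fin K} (ha : a ∉ s) :
    IndepFun (fun ω => ∑ j ∈ s, Complex.normSq (H ω i j))
      (fun ω => Complex.normSq (H ω i a)) μ := by
  have h := (Yindep hiid).indepFun_finsetSum_of_notMem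
    (fun q => meas_normSq.comp (hmeas q.1 q.2))
    (s := s.image (fun j => (i, j))) (i := (i, a))
    (by simp [ha])
  have hsum : (∑ q ∈ s.image (fun j => (i, j)), fun ω => Complex.normSq (H ω q.1 q.2))
      = fun ω => ∑ j ∈ s, Complex.normSq (H ω i j) := by
    rw [Finset.sum_image (fun x hx y hy h => by simpa using congrArg Prod.snd h)]
    ext ω
    simp
  rwa [hsum] at h

include hmeas hiid in
lemma indep_pow_pow (i : Fin M) (s : Finset (Fin K)) {a : Fin K} (ha : a ∉ s) (m l : ℕ) :
    IndepFun (fun ω => Complex.normSq (H ω i a) ^ m)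
      (fun ω => (∑ j ∈ s, Complex.normSq (H ω i j)) ^ l) μ :=
  ((indep_sum_single hmeas hiid i s ha).symm).comp
    (measurable_id.pow_const m) (measurable_id.pow_const l)

include hmeas hiid in
lemma Tmoments (i : Fin M) (s : Finset (Fin K)) :
    (∀ b : ℕ, b ≤ 3 → Integrable (fun ω => (∑ j ∈ s, Complex.normSq (H ω i j)) ^ b) μ) ∧
    (∫ ω, (∑ j ∈ s, Complex.normSq (H ω i j)) ∂μ) = (s.card : ℝ) ∧
    (∫ ω, (∑ j ∈ s, Complex.normSq (H ω i j)) ^ 2 ∂μ) = (s.card : ℝ)^2 + s.card ∧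
    (∫ ω, (∑ j ∈ s, Complex.normSq (H ω i j)) ^ 3 ∂μ)
      = (s.card : ℝ)^3 + 3*(s.card:ℝ)^2 + 2*s.card := by
  classical
  induction s using Finset.induction_on with
  | empty =>
    refine ⟨fun b hb => ?_, ?_, ?_, ?_⟩ <;>
      simp only [Finset.sum_empty, Finset.card_empty, Nat.cast_zero]
    · exact integrable_const _
    · simp
    · simp
    · simp
  | @insert a s ha ih =>
    obtain ⟨ihint, ih1, ih2, ih3⟩ := ih
    set Y : Ω → ℝ := fun ω => Complex.normSq (H ω i a) with hY
    set T : Ω → ℝ := fun ω => ∑ j ∈ s, Complex.normSq (H ω i j) with hT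
    have hiY : ∀ m : ℕ, Integrable (fun ω => Y ω ^ m) μ := fun m => Yintegrable hmeas hiid i a m
    have hEY1 : ∫ ω, Y ω ∂μ = 1 := integral_normSq_one (hmeas i a) (hiid.2 (i,a))
    have hEY2 : ∫ ω, Y ω ^ 2 ∂μ = 2 := integral_normSq_two (hmeas i a) (hiid.2 (i,a))
    have hEY3 : ∫ ω, Y ω ^ 3 ∂μ = 6 := integral_normSq_three (hmeas i a) (hiid.2 (i,a))
    have hind : ∀ m l : ℕ, IndepFun (fun ω => Y ω ^ m) (fun ω => T ω ^ l) μ :=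
      fun m l => indep_pow_pow hmeas hiid i s ha m l
    have hmul : ∀ m l : ℕ, l ≤ 3 → Integrable (fun ω => Y ω ^ m * T ω ^ l) μ := by
      intro m l hl
      exact (hind m l).integrable_mul (hiY m) (ihint l hl)
    have hEmul : ∀ m l : ℕ, l ≤ 3 → (∫ ω, Y ω ^ m * T ω ^ l ∂μ)
        = (∫ ω, Y ω ^ m ∂μ) * ∫ ω, T ω ^ l ∂μ := by
      intro m l hl
      exact (hind m l).integral_fun_mul_eq_mul_integral (hiY m).1 (ihint l hl).1
    have hsum : ∀ ω, (∑ j ∈ insert a s, Complex.normSq (H ω i j)) = Y ω + T ω := by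
      intro ω; rw [Finset.sum_insert ha]
    have hcard : ((insert a s).card : ℝ) = (s.card : ℝ) + 1 := by
      rw [Finset.card_insert_of_notMem ha]; push_cast; ring
    have E1 : (fun ω => (∑ j ∈ insert a s, Complex.normSq (H ω i j)) ^ 1)
        = fun ω => Y ω ^ 1 * T ω ^ 0 + Y ω ^ 0 * T ω ^ 1 :=
      funext fun ω => by rw [hsum ω]; ring
    have E2 : (fun ω => (∑ j ∈ insert a s, Complex.normSq (H ω i j)) ^ 2)
        = fun ω => Y ω ^ 2 * T ω ^ 0 + 2 * (Y ω ^ 1 * T ω ^ 1) + Y ω ^ 0 * T ω ^ 2 :=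
      funext fun ω => by rw [hsum ω]; ring
    have E3 : (fun ω => (∑ j ∈ insert a s, Complex.normSq (H ω i j)) ^ 3)
        = fun ω => Y ω ^ 3 * T ω ^ 0 + 3 * (Y ω ^ 2 * T ω ^ 1) + 3 * (Y ω ^ 1 * T ω ^ 2)
          + Y ω ^ 0 * T ω ^ 3 :=
      funext fun ω => by rw [hsum ω]; ring
    have hintb : ∀ b : ℕ, b ≤ 3 →
        Integrable (fun ω => (∑ j ∈ insert a s, Complex.normSq (H ω i j)) ^ b) μ := by
      intro b hb
      interval_cases b
      · exact integrable_const _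
      · rw [E1]
        exact (hmul 1 0 (by norm_num)).add (hmul 0 1 (by norm_num))
      · rw [E2]
        exact ((hmul 2 0 (by norm_num)).add ((hmul 1 1 (by norm_num)).const_mul 2)).add
          (hmul 0 2 (by norm_num))
      · rw [E3]
        exact (((hmul 3 0 (by norm_num)).add ((hmul 2 1 (by norm_num)).const_mul 3)).add
          ((hmul 1 2 (by norm_num)).const_mul 3)).add (hmul 0 3 (by norm_num))
    refine ⟨hintb, ?_, ?_, ?_⟩
    · have h0 : (fun ω => (∑ j ∈ insert a s, Complex.normSq (H ω i j)))
          = fun ω => Y ω + T ω := funext hsum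
      rw [h0, integral_add (by simpa using hiY 1) (by simpa using ihint 1 (by norm_num)),
        hEY1, ih1, hcard]
      ring
    · have i20 : Integrable (fun ω => Y ω ^ 2 * T ω ^ 0) μ := hmul 2 0 (by norm_num)
      have i11 : Integrable (fun ω => 2 * (Y ω ^ 1 * T ω ^ 1)) μ :=
        (hmul 1 1 (by norm_num)).const_mul 2
      have i02 : Integrable (fun ω => Y ω ^ 0 * T ω ^ 2) μ := hmul 0 2 (by norm_num)
      have i2011 : Integrable (fun ω => Y ω ^ 2 * T ω ^ 0 + 2 * (Y ω ^ 1 * T ω ^ 1)) μ :=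
        i20.add i11
      rw [E2, integral_add i2011 i02, integral_add i20 i11,
        integral_const_mul,
        hEmul 2 0 (by norm_num), hEmul 1 1 (by norm_num), hEmul 0 2 (by norm_num)]
      simp only [pow_zero, pow_one]
      rw [hEY1, hEY2, ih1, ih2, hcard]
      have : ∫ (_ : Ω), (1:ℝ) ∂μ = 1 := by simp
      rw [this]
      ring
    · have i30 : Integrable (fun ω => Y ω ^ 3 * T ω ^ 0) μ := hmul 3 0 (by norm_num)
      have i21 : Integrable (fun ω => 3 * (Y ω ^ 2 * T ω ^ 1)) μ :=
        (hmul 2 1 (by norm_num)).const_mul 3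
      have i12 : Integrable (fun ω => 3 * (Y ω ^ 1 * T ω ^ 2)) μ :=
        (hmul 1 2 (by norm_num)).const_mul 3
      have i03 : Integrable (fun ω => Y ω ^ 0 * T ω ^ 3) μ := hmul 0 3 (by norm_num)
      have ia : Integrable (fun ω => Y ω ^ 3 * T ω ^ 0 + 3 * (Y ω ^ 2 * T ω ^ 1)) μ := i30.add i21
      have ib : Integrable (fun ω => Y ω ^ 3 * T ω ^ 0 + 3 * (Y ω ^ 2 * T ω ^ 1)
          + 3 * (Y ω ^ 1 * T ω ^ 2)) μ := ia.add i12
      rw [E3, integral_add ib i03, integral_add ia i12, integral_add i30 i21,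
        integral_const_mul, integral_const_mul,
        hEmul 3 0 (by norm_num), hEmul 2 1 (by norm_num), hEmul 1 2 (by norm_num),
        hEmul 0 3 (by norm_num)]
      simp only [pow_zero, pow_one]
      rw [hEY1, hEY2, hEY3, ih1, ih2, ih3, hcard]
      have : ∫ (_ : Ω), (1:ℝ) ∂μ = 1 := by simp
      rw [this]
      ring

include hmeas hiid in
lemma rowMoment (i : Fin M) (k : Fin K) :
    Integrable (fun ω => (∑ j, Complex.normSq (H ω i j)) ^ 3 * Complex.normSq (H ω i k)) μ ∧
    ∫ ω, (∑ j, Complex.normSq (H ω i j)) ^ 3 * Complex.normSq (H ω i k) ∂μ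
      = (K:ℝ)^3 + 6*(K:ℝ)^2 + 11*K + 6 := by
  classical
  set Y : Ω → ℝ := fun ω => Complex.normSq (H ω i k) with hYdef
  set s : Finset (Fin K) := Finset.univ.erase k with hs
  set T : Ω → ℝ := fun ω => ∑ j ∈ s, Complex.normSq (H ω i j) with hTdef
  have ha : k ∉ s := Finset.notMem_erase k _
  obtain ⟨ihint, ih1, ih2, ih3⟩ := Tmoments hmeas hiid i s
  have hiY : ∀ m : ℕ, Integrable (fun ω => Y ω ^ m) μ := fun m => Yintegrable hmeas hiid i k m
  have hind : ∀ m l : ℕ, IndepFun (fun ω => Y ω ^ m) (fun ω => T ω ^ l) μ :=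
    fun m l => indep_pow_pow hmeas hiid i s ha m l
  have hmul : ∀ m l : ℕ, l ≤ 3 → Integrable (fun ω => Y ω ^ m * T ω ^ l) μ :=
    fun m l hl => (hind m l).integrable_mul (hiY m) (ihint l hl)
  have hEmul : ∀ m l : ℕ, l ≤ 3 → (∫ ω, Y ω ^ m * T ω ^ l ∂μ)
      = (∫ ω, Y ω ^ m ∂μ) * ∫ ω, T ω ^ l ∂μ :=
    fun m l hl => (hind m l).integral_fun_mul_eq_mul_integral (hiY m).1 (ihint l hl).1
  have hsum : ∀ ω, (∑ j, Complex.normSq (H ω i j)) = Y ω + T ω := by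
    intro ω
    rw [hTdef, hYdef, hs]
    exact (Finset.add_sum_erase _ _ (Finset.mem_univ k)).symm
  have E : (fun ω => (∑ j, Complex.normSq (H ω i j)) ^ 3 * Complex.normSq (H ω i k))
      = fun ω => Y ω ^ 4 * T ω ^ 0 + 3 * (Y ω ^ 3 * T ω ^ 1) + 3 * (Y ω ^ 2 * T ω ^ 2)
        + Y ω ^ 1 * T ω ^ 3 :=
    funext fun ω => by rw [hsum ω]; show _ = _; ring
  have i40 : Integrable (fun ω => Y ω ^ 4 * T ω ^ 0) μ := hmul 4 0 (by norm_num)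
  have i31 : Integrable (fun ω => 3 * (Y ω ^ 3 * T ω ^ 1)) μ :=
    (hmul 3 1 (by norm_num)).const_mul 3
  have i22 : Integrable (fun ω => 3 * (Y ω ^ 2 * T ω ^ 2)) μ :=
    (hmul 2 2 (by norm_num)).const_mul 3
  have i13 : Integrable (fun ω => Y ω ^ 1 * T ω ^ 3) μ := hmul 1 3 (by norm_num)
  have ia : Integrable (fun ω => Y ω ^ 4 * T ω ^ 0 + 3 * (Y ω ^ 3 * T ω ^ 1)) μ := i40.add i31
  have ib : Integrable (fun ω => Y ω ^ 4 * T ω ^ 0 + 3 * (Y ω ^ 3 * T ω ^ 1)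
      + 3 * (Y ω ^ 2 * T ω ^ 2)) μ := ia.add i22
  constructor
  · rw [E]; exact ib.add i13
  · have hcard : ((s.card : ℕ) : ℝ) = (K : ℝ) - 1 := by
      rw [hs, Finset.card_erase_of_mem (Finset.mem_univ k), Finset.card_univ, Fintype.card_fin,
        Nat.cast_sub k.pos, Nat.cast_one]
    rw [E, integral_add ib i13, integral_add ia i22, integral_add i40 i31,
      integral_const_mul, integral_const_mul,
      hEmul 4 0 (by norm_num), hEmul 3 1 (by norm_num), hEmul 2 2 (by norm_num),
      hEmul 1 3 (by norm_num)]
    have hE4 : ∫ ω, Y ω ^ 4 ∂μ = 24 := integral_normSq_four (hmeas i k) (hiid.2 (i,k))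
    have hE3 : ∫ ω, Y ω ^ 3 ∂μ = 6 := integral_normSq_three (hmeas i k) (hiid.2 (i,k))
    have hE2 : ∫ ω, Y ω ^ 2 ∂μ = 2 := integral_normSq_two (hmeas i k) (hiid.2 (i,k))
    have hE1 : ∫ ω, Y ω ∂μ = 1 := integral_normSq_one (hmeas i k) (hiid.2 (i,k))
    have j1 : ∫ ω, T ω ∂μ = (s.card : ℝ) := ih1
    have j2 : ∫ ω, T ω ^ 2 ∂μ = (s.card : ℝ)^2 + s.card := ih2
    have j3 : ∫ ω, T ω ^ 3 ∂μ = (s.card : ℝ)^3 + 3*(s.card:ℝ)^2 + 2*s.card := ih3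
    simp only [pow_zero, pow_one]
    rw [hE4, hE3, hE2, hE1, j1, j2, j3, hcard]
    have : ∫ (_ : Ω), (1:ℝ) ∂μ = 1 := by simp
    rw [this]
    ring

end Row

end DistortionAux

-- MAINTHM
open DistortionAux in
/-- **Lemma 2, uncorrelated part.** In the same i.i.d. Rayleigh fading setup,
with `C_ηη^diag = C_ηη ⊙ I_M` keeping only the diagonal of the third-order
distortion correlation matrix,
`E[h_kᴴ C_ηη^diag h_k] / E[‖h_k‖²] = (2α²p/b²)(K + 6 + 11/K + 6/K²)`. -/
theorem expected_distortion_power_uncorrelated {Ω : Type*} [MeasurableSpace Ω]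
    (μ : Measure Ω) [IsProbabilityMeasure μ] (M K : ℕ) (hM : 0 < M) (hK : 0 < K)
    (p α b : ℝ) (hp : 0 < p) (hα : 0 < α) (hb : 0 < b)
    (H : Ω → Matrix (Fin M) (Fin K) ℂ)
    (hmeas : ∀ i j, Measurable fun ω => H ω i j)
    (hiid : IidStdCGaussianMatrix μ H) (k : Fin K) :
    let Cuu : Ω → Matrix (Fin M) (Fin M) ℂ := fun ω => (p : ℂ) • (H ω * (H ω)ᴴ)
    let A : Matrix (Fin M) (Fin M) ℂ := ((α / (b * p * K) : ℝ) : ℂ) • (1 : Matrix (Fin M) (Fin M) ℂ)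
    let Cηη : Ω → Matrix (Fin M) (Fin M) ℂ := fun ω =>
      (2 : ℂ) • (A * (Cuu ω ⊙ (Cuu ω).map (starRingEnd ℂ) ⊙ Cuu ω) * A)
    let Cηηdiag : Ω → Matrix (Fin M) (Fin M) ℂ := fun ω => Cηη ω ⊙ (1 : Matrix (Fin M) (Fin M) ℂ)
    (∫ ω, (star (fun i => H ω i k) ⬝ᵥ (Cηηdiag ω) *ᵥ (fun i => H ω i k)).re ∂μ)
        / (∫ ω, ∑ i, Complex.normSq (H ω i k) ∂μ)
      = (2 * α ^ 2 * p / b ^ 2) * (K + 6 + 11 / K + 6 / (K : ℝ) ^ 2) := by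
  intro Cuu A Cηη Cηηdiag
  set c : ℝ := α / (b * p * K) with hc
  have hCd : ∀ ω, Cηηdiag ω
      = ((2:ℂ) • (A * (Cuu ω ⊙ (Cuu ω).map (starRingEnd ℂ) ⊙ Cuu ω) * A)) ⊙ 1 := fun _ => rfl
  have hA : A = ((c : ℝ) : ℂ) • 1 := rfl
  have hCuuE : ∀ ω, Cuu ω = (p:ℂ) • (H ω * (H ω)ᴴ) := fun _ => rfl
  have hHH : ∀ ω (i : Fin M), (H ω * (H ω)ᴴ) i i
      = ((∑ j, Complex.normSq (H ω i j) : ℝ) : ℂ) := by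
    intro ω i
    rw [Matrix.mul_apply]
    push_cast
    exact Finset.sum_congr rfl fun j _ => by
      rw [Matrix.conjTranspose_apply]
      exact Complex.mul_conj _
  have hCuu : ∀ ω (i : Fin M), Cuu ω i i
      = ((p * ∑ j, Complex.normSq (H ω i j) : ℝ) : ℂ) := by
    intro ω i
    rw [hCuuE, Matrix.smul_apply, hHH, smul_eq_mul, ← Complex.ofReal_mul]
  have hentry : ∀ ω (i j : Fin M), Cηηdiag ω i j
      = if i = j then ((2*c^2*p^3*(∑ l, Complex.normSq (H ω i l))^3 : ℝ) : ℂ) else 0 := by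
    intro ω i j
    rw [hCd, Matrix.hadamard_apply, Matrix.one_apply]
    by_cases h : i = j
    · subst h
      rw [if_pos rfl, mul_one, if_pos rfl]
      have h1 : (A * (Cuu ω ⊙ (Cuu ω).map (starRingEnd ℂ) ⊙ Cuu ω) * A)
          = ((c:ℝ):ℂ)^2 • (Cuu ω ⊙ (Cuu ω).map (starRingEnd ℂ) ⊙ Cuu ω) := by
        rw [hA, Matrix.smul_mul, Matrix.one_mul, Matrix.mul_smul, Matrix.mul_one, smul_smul, sq]
      rw [h1, Matrix.smul_apply, Matrix.smul_apply, Matrix.hadamard_apply,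
        Matrix.hadamard_apply, Matrix.map_apply, hCuu, Complex.conj_ofReal,
        smul_eq_mul, smul_eq_mul]
      push_cast
      ring
    · rw [if_neg h, mul_zero, if_neg h]
  have hform : ∀ ω, (star (fun i => H ω i k) ⬝ᵥ (Cηηdiag ω) *ᵥ (fun i => H ω i k))
      = ((∑ i, 2*c^2*p^3 * ((∑ j, Complex.normSq (H ω i j))^3 * Complex.normSq (H ω i k))
          : ℝ) : ℂ) := by
    intro ω
    rw [dotProduct]
    push_cast
    refine Finset.sum_congr rfl fun i _ => ?_
    have hmv : ((Cηηdiag ω) *ᵥ (fun i => H ω i k)) i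
        = ((2*c^2*p^3*(∑ l, Complex.normSq (H ω i l))^3 : ℝ) : ℂ) * H ω i k := by
      rw [Matrix.mulVec]
      rw [dotProduct]
      rw [Finset.sum_congr rfl fun j _ => by rw [hentry ω i j]]
      simp [ite_mul]
    rw [hmv, Pi.star_apply]
    have : (star (H ω i k)) * (((2*c^2*p^3*(∑ l, Complex.normSq (H ω i l))^3 : ℝ) : ℂ) * H ω i k)
        = ((2*c^2*p^3*(∑ l, Complex.normSq (H ω i l))^3 : ℝ) : ℂ)
          * ((H ω i k) * star (H ω i k)) := by ring
    rw [this, Complex.star_def, Complex.mul_conj]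
    push_cast
    ring
  have hnum : (∫ ω, (star (fun i => H ω i k) ⬝ᵥ (Cηηdiag ω) *ᵥ (fun i => H ω i k)).re ∂μ)
      = M * (2*c^2*p^3 * ((K:ℝ)^3 + 6*(K:ℝ)^2 + 11*K + 6)) := by
    have hfun : (fun ω => (star (fun i => H ω i k) ⬝ᵥ (Cηηdiag ω) *ᵥ (fun i => H ω i k)).re)
        = fun ω => ∑ i, 2*c^2*p^3
            * ((∑ j, Complex.normSq (H ω i j))^3 * Complex.normSq (H ω i k)) :=
      funext fun ω => by rw [hform ω, Complex.ofReal_re]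
    rw [hfun, integral_finset_sum _ (fun i _ => ((rowMoment hmeas hiid i k).1.const_mul _)),
      Finset.sum_congr rfl (fun i (_ : i ∈ Finset.univ) => by
        rw [integral_const_mul, (rowMoment hmeas hiid i k).2]),
      Finset.sum_const, Finset.card_univ, Fintype.card_fin, nsmul_eq_mul]
  have hden : (∫ ω, ∑ i, Complex.normSq (H ω i k) ∂μ) = (M : ℝ) := by
    rw [integral_finset_sum _ (fun i _ => by
        simpa using Yintegrable hmeas hiid i k 1),
      Finset.sum_congr rfl (fun i (_ : i ∈ Finset.univ) =>
        integral_normSq_one (hmeas i k) (hiid.2 (i,k)))]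
    simp
  rw [hnum, hden, hc]
  have hMr : (M:ℝ) ≠ 0 := Nat.cast_ne_zero.mpr hM.ne'
  have hKr : (K:ℝ) ≠ 0 := Nat.cast_ne_zero.mpr hK.ne'
  rw [mul_div_cancel_left₀ _ hMr]
  field_simp
end

section
/- Let u ∼ CN(0, ρ) with ρ > 0 and g(u) = u − a|u|^2 u. Then the signal-to-distortion power ratio of the output satisfies |d|^2 ρ / E[|η|^2] = (1 − 2aρ)^2 / (2 a^2 ρ^2), where d = 1 − 2aρ and η = g(u) − d·u. In particular with a = α/(b ρ), this equals (1 − 2α/b)^2 b^2/(2α^2). -/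
open MeasureTheory ProbabilityTheory Complex ComplexConjugate

section SDRAux

open MeasureTheory ProbabilityTheory Complex Real Set NNReal ENNReal

lemma sdr_integral_pow_mul_exp {b : ℝ} (hb : 0 < b) (k : ℕ) :
    ∫ x : ℝ, x ^ (2 * k) * Real.exp (-b * x ^ 2)
      = b ^ (-(((2 * k : ℕ) : ℝ) + 1) / 2) * Real.Gamma ((((2 * k : ℕ) : ℝ) + 1) / 2) := by
  have h1 : ∫ x : ℝ, x ^ (2 * k) * Real.exp (-b * x ^ 2)
      = 2 * ∫ x in Ioi (0 : ℝ), x ^ (2 * k) * Real.exp (-b * x ^ 2) := by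
    rw [← integral_comp_abs (f := fun x => x ^ (2 * k) * Real.exp (-b * x ^ 2))]
    congr 1; ext x
    rw [(even_two_mul k).pow_abs, _root_.sq_abs]
  have h2 : ∫ x in Ioi (0 : ℝ), x ^ (2 * k) * Real.exp (-b * x ^ 2)
      = ∫ x in Ioi (0 : ℝ), x ^ (((2 * k : ℕ) : ℝ)) * Real.exp (-b * x ^ (2 : ℝ)) := by
    refine setIntegral_congr_fun measurableSet_Ioi (fun x _ => ?_)
    rw [Real.rpow_natCast, show (2 : ℝ) = ((2 : ℕ) : ℝ) by norm_num, Real.rpow_natCast]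
  rw [h1, h2, integral_rpow_mul_exp_neg_mul_rpow two_pos
    (lt_of_lt_of_le neg_one_lt_zero (by positivity)) hb]
  ring

lemma sdr_integrable_pow_mul_exp {b : ℝ} (hb : 0 < b) (k : ℕ) :
    Integrable (fun x : ℝ => x ^ (2 * k) * Real.exp (-b * x ^ 2)) := by
  have h := integrable_rpow_mul_exp_neg_mul_sq hb
    (s := ((2 * k : ℕ) : ℝ)) (lt_of_lt_of_le neg_one_lt_zero (by positivity))
  simp only [Real.rpow_natCast] at h
  exact h

lemma sdr_pdf_eq {v : ℝ} (hv : 0 < v) (x : ℝ) :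
    gaussianPDFReal 0 v.toNNReal x
      = (Real.sqrt (2 * π * v))⁻¹ * Real.exp (-(2 * v)⁻¹ * x ^ 2) := by
  rw [gaussianPDFReal, Real.coe_toNNReal v hv.le]
  congr 2
  ring

lemma sdr_gaussianReal_moment (k : ℕ) {v : ℝ} (hv : 0 < v) :
    ∫ x : ℝ, x ^ (2 * k) ∂(gaussianReal 0 v.toNNReal)
      = (2 * v) ^ k * Real.Gamma ((k : ℝ) + 1 / 2) / Real.sqrt π := by
  have hw0 : v.toNNReal ≠ 0 := by simp [Real.toNNReal_eq_zero]; linarith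
  have hb : 0 < (2 * v)⁻¹ := by positivity
  have hfun : (fun x : ℝ => ((gaussianPDFReal 0 v.toNNReal x).toNNReal : ℝ≥0) • x ^ (2 * k))
      = fun x : ℝ => (Real.sqrt (2 * π * v))⁻¹ * (x ^ (2 * k) * Real.exp (-(2 * v)⁻¹ * x ^ 2)) :=
    funext fun x => by
      rw [NNReal.smul_def, Real.coe_toNNReal _ (gaussianPDFReal_nonneg _ _ _), sdr_pdf_eq hv x,
        smul_eq_mul]; ring
  rw [gaussianReal_of_var_ne_zero 0 hw0,
    show gaussianPDF 0 v.toNNReal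
        = fun x => ((Real.toNNReal (gaussianPDFReal 0 v.toNNReal x) : ℝ≥0) : ℝ≥0∞) from rfl,
    integral_withDensity_eq_integral_smul
      ((measurable_gaussianPDFReal 0 v.toNNReal).real_toNNReal) _,
    hfun, integral_const_mul, sdr_integral_pow_mul_exp hb k]
  have h2v : (0:ℝ) < 2 * v := by positivity
  have e1 : ((2 * v)⁻¹ : ℝ) ^ (-(((2 * k : ℕ) : ℝ) + 1) / 2)
      = (2 * v) ^ ((k : ℝ) + 1 / 2) := by
    rw [Real.inv_rpow h2v.le, ← Real.rpow_neg h2v.le]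
    congr 1
    push_cast
    ring
  have e2 : ((2 * v) : ℝ) ^ ((k : ℝ) + 1 / 2) = (2 * v) ^ k * Real.sqrt (2 * v) := by
    rw [Real.rpow_add h2v, Real.rpow_natCast, Real.sqrt_eq_rpow]
  have e3 : (((2 * k : ℕ) : ℝ) + 1) / 2 = (k : ℝ) + 1 / 2 := by push_cast; ring
  have e4 : Real.sqrt (2 * π * v) = Real.sqrt π * Real.sqrt (2 * v) := by
    rw [show 2 * π * v = π * (2 * v) by ring, Real.sqrt_mul Real.pi_pos.le]
  rw [e1, e2, e3, e4]
  have h1 : Real.sqrt π ≠ 0 := (Real.sqrt_pos.mpr Real.pi_pos).ne'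
  have h2 : Real.sqrt (2 * v) ≠ 0 := (Real.sqrt_pos.mpr h2v).ne'
  field_simp

lemma sdr_integrable_pow_gaussianReal (k : ℕ) {v : ℝ} (hv : 0 < v) :
    Integrable (fun x : ℝ => x ^ (2 * k)) (gaussianReal 0 v.toNNReal) := by
  have hw0 : v.toNNReal ≠ 0 := by simp [Real.toNNReal_eq_zero]; linarith
  have hb : 0 < (2 * v)⁻¹ := by positivity
  have hfun : (fun x : ℝ => ((gaussianPDFReal 0 v.toNNReal x).toNNReal : ℝ≥0) • x ^ (2 * k))
      = fun x : ℝ => (Real.sqrt (2 * π * v))⁻¹ * (x ^ (2 * k) * Real.exp (-(2 * v)⁻¹ * x ^ 2)) :=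
    funext fun x => by
      rw [NNReal.smul_def, Real.coe_toNNReal _ (gaussianPDFReal_nonneg _ _ _), sdr_pdf_eq hv x,
        smul_eq_mul]; ring
  rw [gaussianReal_of_var_ne_zero 0 hw0,
    show gaussianPDF 0 v.toNNReal
        = fun x => ((Real.toNNReal (gaussianPDFReal 0 v.toNNReal x) : ℝ≥0) : ℝ≥0∞) from rfl,
    integrable_withDensity_iff_integrable_smul
      ((measurable_gaussianPDFReal 0 v.toNNReal).real_toNNReal), hfun]
  exact (sdr_integrable_pow_mul_exp hb k).const_mul _

lemma sdr_gamma_half : Real.Gamma (1 / 2) = Real.sqrt π := by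
  rw [Real.Gamma_one_half_eq]

lemma sdr_moment_two {v : ℝ} (hv : 0 < v) :
    ∫ x : ℝ, x ^ 2 ∂(gaussianReal 0 v.toNNReal) = v := by
  have h := sdr_gaussianReal_moment 1 hv
  norm_num at h
  rw [h, show ((3:ℝ)/2) = 1/2 + 1 by ring, Real.Gamma_add_one (by norm_num), sdr_gamma_half]
  have h1 : Real.sqrt π ≠ 0 := (Real.sqrt_pos.mpr Real.pi_pos).ne'
  field_simp

lemma sdr_moment_four {v : ℝ} (hv : 0 < v) :
    ∫ x : ℝ, x ^ 4 ∂(gaussianReal 0 v.toNNReal) = 3 * v ^ 2 := by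
  have h := sdr_gaussianReal_moment 2 hv
  norm_num at h
  rw [h, show ((5:ℝ)/2) = (1/2 + 1) + 1 by ring, Real.Gamma_add_one (by norm_num),
    Real.Gamma_add_one (by norm_num), sdr_gamma_half]
  have h1 : Real.sqrt π ≠ 0 := (Real.sqrt_pos.mpr Real.pi_pos).ne'
  field_simp
  ring

lemma sdr_moment_six {v : ℝ} (hv : 0 < v) :
    ∫ x : ℝ, x ^ 6 ∂(gaussianReal 0 v.toNNReal) = 15 * v ^ 3 := by
  have h := sdr_gaussianReal_moment 3 hv
  norm_num at h
  rw [h, show ((7:ℝ)/2) = ((1/2 + 1) + 1) + 1 by ring, Real.Gamma_add_one (by norm_num),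
    Real.Gamma_add_one (by norm_num), Real.Gamma_add_one (by norm_num), sdr_gamma_half]
  have h1 : Real.sqrt π ≠ 0 := (Real.sqrt_pos.mpr Real.pi_pos).ne'
  field_simp
  ring

end SDRAux

/-- For `u ∼ CN(0,ρ)` with `ρ > 0` and `g(u) = u − a|u|²u`, with Bussgang gain
`d = 1 − 2aρ` and distortion `η = g(u) − d·u`, the signal-to-distortion power
ratio is `|d|²ρ / E[|η|²] = (1 − 2aρ)²/(2a²ρ²)`; in particular, for
`a = α/(bρ)` it equals `(1 − 2α/b)² b²/(2α²)`. -/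
theorem signal_to_distortion_ratio {Ω : Type*} [MeasurableSpace Ω]
    (μ : Measure Ω) [IsProbabilityMeasure μ] (u : Ω → ℂ) (ρ a α b : ℝ)
    (hu : Measurable u) (hρ : 0 < ρ) (ha : 0 < a) (hα : 0 < α) (hb : 0 < b)
    (hGauss : IsCircGaussian μ u ρ)
    (hvar : ∫ ω, Complex.normSq (u ω) ∂μ = ρ) :
    let d : ℝ := 1 - 2 * a * ρ
    let η : Ω → ℂ := fun ω => thirdOrderNL a (u ω) - (d : ℂ) * u ω
    (d ^ 2 * ρ / ∫ ω, Complex.normSq (η ω) ∂μ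
        = (1 - 2 * a * ρ) ^ 2 / (2 * a ^ 2 * ρ ^ 2)) ∧
      (a = α / (b * ρ) →
        d ^ 2 * ρ / ∫ ω, Complex.normSq (η ω) ∂μ
          = (1 - 2 * α / b) ^ 2 * b ^ 2 / (2 * α ^ 2)) := by
  intro d η
  obtain ⟨hXlaw, hYlaw, hindep⟩ := hGauss
  set X : Ω → ℝ := fun ω => (u ω).re with hXdef
  set Y : Ω → ℝ := fun ω => (u ω).im with hYdef
  have hXm : Measurable X := Complex.measurable_re.comp hu
  have hYm : Measurable Y := Complex.measurable_im.comp hu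
  have hv : 0 < ρ / 2 := by linarith
  have momX : ∀ k : ℕ, ∫ ω, X ω ^ (2 * k) ∂μ
      = ∫ x, x ^ (2 * k) ∂(gaussianReal 0 (ρ / 2).toNNReal) := by
    intro k
    rw [← hXlaw]
    exact (integral_map hXm.aemeasurable
      ((measurable_id.pow_const (2 * k)).aestronglyMeasurable)).symm
  have momY : ∀ k : ℕ, ∫ ω, Y ω ^ (2 * k) ∂μ
      = ∫ x, x ^ (2 * k) ∂(gaussianReal 0 (ρ / 2).toNNReal) := by
    intro k
    rw [← hYlaw]
    exact (integral_map hYm.aemeasurable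
      ((measurable_id.pow_const (2 * k)).aestronglyMeasurable)).symm
  have intX : ∀ k : ℕ, Integrable (fun ω => X ω ^ (2 * k)) μ := by
    intro k
    have h := sdr_integrable_pow_gaussianReal k hv
    rw [← hXlaw] at h
    exact (integrable_map_measure
      ((measurable_id.pow_const (2 * k)).aestronglyMeasurable) hXm.aemeasurable).mp h
  have intY : ∀ k : ℕ, Integrable (fun ω => Y ω ^ (2 * k)) μ := by
    intro k
    have h := sdr_integrable_pow_gaussianReal k hv
    rw [← hYlaw] at h
    exact (integrable_map_measure
      ((measurable_id.pow_const (2 * k)).aestronglyMeasurable) hYm.aemeasurable).mp h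
  have hX2 : ∫ ω, X ω ^ 2 ∂μ = ρ / 2 := by
    have h := momX 1; norm_num at h; rw [h, sdr_moment_two hv]
  have hY2 : ∫ ω, Y ω ^ 2 ∂μ = ρ / 2 := by
    have h := momY 1; norm_num at h; rw [h, sdr_moment_two hv]
  have hX4 : ∫ ω, X ω ^ 4 ∂μ = 3 * (ρ / 2) ^ 2 := by
    have h := momX 2; norm_num at h; rw [h, sdr_moment_four hv]
  have hY4 : ∫ ω, Y ω ^ 4 ∂μ = 3 * (ρ / 2) ^ 2 := by
    have h := momY 2; norm_num at h; rw [h, sdr_moment_four hv]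
  have hX6 : ∫ ω, X ω ^ 6 ∂μ = 15 * (ρ / 2) ^ 3 := by
    have h := momX 3; norm_num at h; rw [h, sdr_moment_six hv]
  have hY6 : ∫ ω, Y ω ^ 6 ∂μ = 15 * (ρ / 2) ^ 3 := by
    have h := momY 3; norm_num at h; rw [h, sdr_moment_six hv]
  have iX2 : Integrable (fun ω => X ω ^ 2) μ := by have h := intX 1; norm_num at h; exact h
  have iY2 : Integrable (fun ω => Y ω ^ 2) μ := by have h := intY 1; norm_num at h; exact h
  have iX4 : Integrable (fun ω => X ω ^ 4) μ := by have h := intX 2; norm_num at h; exact h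
  have iY4 : Integrable (fun ω => Y ω ^ 4) μ := by have h := intY 2; norm_num at h; exact h
  have iX6 : Integrable (fun ω => X ω ^ 6) μ := by have h := intX 3; norm_num at h; exact h
  have iY6 : Integrable (fun ω => Y ω ^ 6) μ := by have h := intY 3; norm_num at h; exact h
  have ind : ∀ i j : ℕ, IndepFun (fun ω => X ω ^ i) (fun ω => Y ω ^ j) μ := fun i j =>
    hindep.comp (measurable_id.pow_const i) (measurable_id.pow_const j)
  have iX2Y2 : Integrable (fun ω => X ω ^ 2 * Y ω ^ 2) μ := (ind 2 2).integrable_mul iX2 iY2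
  have iX4Y2 : Integrable (fun ω => X ω ^ 4 * Y ω ^ 2) μ := (ind 4 2).integrable_mul iX4 iY2
  have iX2Y4 : Integrable (fun ω => X ω ^ 2 * Y ω ^ 4) μ := (ind 2 4).integrable_mul iX2 iY4
  have h22 : ∫ ω, X ω ^ 2 * Y ω ^ 2 ∂μ = (ρ / 2) * (ρ / 2) := by
    have h := (ind 2 2).integral_fun_mul_eq_mul_integral iX2.aestronglyMeasurable iY2.aestronglyMeasurable
    rw [hX2, hY2] at h; exact h
  have h42 : ∫ ω, X ω ^ 4 * Y ω ^ 2 ∂μ = (3 * (ρ / 2) ^ 2) * (ρ / 2) := by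
    have h := (ind 4 2).integral_fun_mul_eq_mul_integral iX4.aestronglyMeasurable iY2.aestronglyMeasurable
    rw [hX4, hY2] at h; exact h
  have h24 : ∫ ω, X ω ^ 2 * Y ω ^ 4 ∂μ = (ρ / 2) * (3 * (ρ / 2) ^ 2) := by
    have h := (ind 2 4).integral_fun_mul_eq_mul_integral iX2.aestronglyMeasurable iY4.aestronglyMeasurable
    rw [hX2, hY4] at h; exact h
  have hpt : ∀ ω, Complex.normSq (η ω) =
      (4 * a ^ 2 * ρ ^ 2) * X ω ^ 2 + ((4 * a ^ 2 * ρ ^ 2) * Y ω ^ 2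
      + ((-(4 * a ^ 2 * ρ)) * X ω ^ 4 + ((-(4 * a ^ 2 * ρ)) * Y ω ^ 4
      + ((-(8 * a ^ 2 * ρ)) * (X ω ^ 2 * Y ω ^ 2) + (a ^ 2 * X ω ^ 6
      + (a ^ 2 * Y ω ^ 6 + ((3 * a ^ 2) * (X ω ^ 4 * Y ω ^ 2)
      + (3 * a ^ 2) * (X ω ^ 2 * Y ω ^ 4)))))))) := by
    intro ω
    have hη : η ω = ((a * (2 * ρ - Complex.normSq (u ω)) : ℝ) : ℂ) * u ω := by
      show thirdOrderNL a (u ω) - ((1 - 2 * a * ρ : ℝ) : ℂ) * u ω = _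
      rw [thirdOrderNL]; push_cast; ring
    rw [hη, map_mul, Complex.normSq_ofReal, Complex.normSq_apply (u ω)]
    simp only [hXdef, hYdef]
    ring
  have I1 : Integrable (fun ω => (4 * a ^ 2 * ρ ^ 2) * X ω ^ 2) μ := iX2.const_mul _
  have I2 : Integrable (fun ω => (4 * a ^ 2 * ρ ^ 2) * Y ω ^ 2) μ := iY2.const_mul _
  have I3 : Integrable (fun ω => (-(4 * a ^ 2 * ρ)) * X ω ^ 4) μ := iX4.const_mul _
  have I4 : Integrable (fun ω => (-(4 * a ^ 2 * ρ)) * Y ω ^ 4) μ := iY4.const_mul _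
  have I5 : Integrable (fun ω => (-(8 * a ^ 2 * ρ)) * (X ω ^ 2 * Y ω ^ 2)) μ :=
    iX2Y2.const_mul _
  have I6 : Integrable (fun ω => a ^ 2 * X ω ^ 6) μ := iX6.const_mul _
  have I7 : Integrable (fun ω => a ^ 2 * Y ω ^ 6) μ := iY6.const_mul _
  have I8 : Integrable (fun ω => (3 * a ^ 2) * (X ω ^ 4 * Y ω ^ 2)) μ := iX4Y2.const_mul _
  have I9 : Integrable (fun ω => (3 * a ^ 2) * (X ω ^ 2 * Y ω ^ 4)) μ := iX2Y4.const_mul _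
  have J8 : Integrable (fun ω => (3 * a ^ 2) * (X ω ^ 4 * Y ω ^ 2)
      + (3 * a ^ 2) * (X ω ^ 2 * Y ω ^ 4)) μ := I8.add I9
  have J7 : Integrable (fun ω => a ^ 2 * Y ω ^ 6 + ((3 * a ^ 2) * (X ω ^ 4 * Y ω ^ 2)
      + (3 * a ^ 2) * (X ω ^ 2 * Y ω ^ 4))) μ := I7.add J8
  have J6 : Integrable (fun ω => a ^ 2 * X ω ^ 6 + (a ^ 2 * Y ω ^ 6
      + ((3 * a ^ 2) * (X ω ^ 4 * Y ω ^ 2)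
      + (3 * a ^ 2) * (X ω ^ 2 * Y ω ^ 4)))) μ := I6.add J7
  have J5 : Integrable (fun ω => (-(8 * a ^ 2 * ρ)) * (X ω ^ 2 * Y ω ^ 2)
      + (a ^ 2 * X ω ^ 6 + (a ^ 2 * Y ω ^ 6 + ((3 * a ^ 2) * (X ω ^ 4 * Y ω ^ 2)
      + (3 * a ^ 2) * (X ω ^ 2 * Y ω ^ 4))))) μ := I5.add J6
  have J4 : Integrable (fun ω => (-(4 * a ^ 2 * ρ)) * Y ω ^ 4
      + ((-(8 * a ^ 2 * ρ)) * (X ω ^ 2 * Y ω ^ 2)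
      + (a ^ 2 * X ω ^ 6 + (a ^ 2 * Y ω ^ 6 + ((3 * a ^ 2) * (X ω ^ 4 * Y ω ^ 2)
      + (3 * a ^ 2) * (X ω ^ 2 * Y ω ^ 4)))))) μ := I4.add J5
  have J3 : Integrable (fun ω => (-(4 * a ^ 2 * ρ)) * X ω ^ 4
      + ((-(4 * a ^ 2 * ρ)) * Y ω ^ 4 + ((-(8 * a ^ 2 * ρ)) * (X ω ^ 2 * Y ω ^ 2)
      + (a ^ 2 * X ω ^ 6 + (a ^ 2 * Y ω ^ 6 + ((3 * a ^ 2) * (X ω ^ 4 * Y ω ^ 2)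
      + (3 * a ^ 2) * (X ω ^ 2 * Y ω ^ 4))))))) μ := I3.add J4
  have J2 : Integrable (fun ω => (4 * a ^ 2 * ρ ^ 2) * Y ω ^ 2
      + ((-(4 * a ^ 2 * ρ)) * X ω ^ 4
      + ((-(4 * a ^ 2 * ρ)) * Y ω ^ 4 + ((-(8 * a ^ 2 * ρ)) * (X ω ^ 2 * Y ω ^ 2)
      + (a ^ 2 * X ω ^ 6 + (a ^ 2 * Y ω ^ 6 + ((3 * a ^ 2) * (X ω ^ 4 * Y ω ^ 2)
      + (3 * a ^ 2) * (X ω ^ 2 * Y ω ^ 4)))))))) μ := I2.add J3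
  have key : ∫ ω, Complex.normSq (η ω) ∂μ = 2 * a ^ 2 * ρ ^ 3 := by
    rw [integral_congr_ae (Filter.Eventually.of_forall hpt)]
    rw [integral_add I1 J2, integral_add I2 J3, integral_add I3 J4, integral_add I4 J5,
      integral_add I5 J6, integral_add I6 J7, integral_add I7 J8, integral_add I8 I9]
    simp only [integral_const_mul]
    rw [hX2, hY2, hX4, hY4, h22, hX6, hY6, h42, h24]
    ring
  have hane : a ≠ 0 := ha.ne'
  have hρne : ρ ≠ 0 := hρ.ne'
  have hαne : α ≠ 0 := hα.ne'
  have hbne : b ≠ 0 := hb.ne'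
  have hd : d = 1 - 2 * a * ρ := rfl
  constructor
  · rw [key, hd]
    field_simp
  · intro hsub
    rw [key, hd, hsub]
    field_simp
end
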